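/- arXiv:1910.13309 — 10 statements merged into one kernel-verified Lean document; each statement's English description precedes it below -/
import Mathlib

section
/- If each component S_i : ℝ^m ⇉ ℝ^n (i = 1,…,l) of a set-valued map S whose graph is the union of the graphs of the S_i is inner semicompact at ȳ with respect to dom S_i, then S is inner semicompact at ȳ with respect to dom S. -/
open Filter Topology

/-- `S` is inner semicompact at `yb` with respect to `Ω`. -/
def InnerSemicompactAt {E F : Type*} [NormedAddCommGroup E] [NormedAddCommGroup F]
    (S : E → Set F) (Ω : Set E) (yb : E) : Prop :=
  ∀ y : ℕ → E, (∀ k, y k ∈ Ω) → Tendsto y atTop (𝓝 yb) →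
    ∃ φ : ℕ → ℕ, StrictMono φ ∧ ∃ x : ℕ → F, ∃ xb : F,
      (∀ k, x k ∈ S (y (φ k))) ∧ Tendsto x atTop (𝓝 xb)

/-! A sequence in `Ω` near `ȳ` meets one of the finitely many domains `Ω i` infinitely often
(pigeonhole); the inner semicompactness of that component along this subsequence gives the
convergent selection for the union. -/

theorem Nat.exists_subseq_of_forall_mem_iUnion {α ι : Type*} [Finite ι] {s : ι → Set α}
    (e : ℕ → α) (he : ∀ n, e n ∈ ⋃ i, s i) :
    ∃ i, ∃ φ : ℕ → ℕ, StrictMono φ ∧ ∀ n, e (φ n) ∈ s i := by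
  have hfreq : ∃ᶠ n in atTop, ∃ i, e n ∈ s i :=
    (Eventually.of_forall fun n => Set.mem_iUnion.1 (he n)).frequently
  obtain ⟨i, hi⟩ := frequently_exists.1 hfreq
  exact ⟨i, extraction_of_frequently_atTop hi⟩

theorem InnerSemicompactAt.iUnion {E F ι : Type*} [NormedAddCommGroup E] [NormedAddCommGroup F]
    [Finite ι] {S : ι → E → Set F} {Ω : ι → Set E} {yb : E}
    (h : ∀ i, InnerSemicompactAt (S i) (Ω i) yb) :
    InnerSemicompactAt (fun y => ⋃ i, S i y) (⋃ i, Ω i) yb := by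
  intro y hy hty
  obtain ⟨i, ψ, hψ, hψi⟩ := Nat.exists_subseq_of_forall_mem_iUnion y hy
  obtain ⟨φ, hφ, x, xb, hx, hxb⟩ := h i (y ∘ ψ) hψi (hty.comp hψ.tendsto_atTop)
  exact ⟨ψ ∘ φ, hψ.comp hφ, x, xb, fun k => Set.mem_iUnion.2 ⟨i, hx k⟩, hxb⟩

/-- If each component `Si i` of `S` (whose graph is the union of the graphs of the
`Si i`) is inner semicompact at `yb` wrt `dom (Si i)`, then `S` is inner semicompact
at `yb` wrt `dom S`. -/
theorem stmt_4 {m n l : ℕ}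
    (S : EuclideanSpace ℝ (Fin m) → Set (EuclideanSpace ℝ (Fin n)))
    (Si : Fin l → EuclideanSpace ℝ (Fin m) → Set (EuclideanSpace ℝ (Fin n)))
    (yb : EuclideanSpace ℝ (Fin m))
    (hgraph : ∀ y, S y = ⋃ i, Si i y)
    (hcomp : ∀ i, InnerSemicompactAt (Si i) {y | (Si i y).Nonempty} yb) :
    InnerSemicompactAt S {y | (S y).Nonempty} yb := by
  obtain rfl : S = fun y => ⋃ i, Si i y := funext hgraph
  have hdom : {y | (⋃ i, Si i y).Nonempty} = ⋃ i, {y | (Si i y).Nonempty} := by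
    ext y
    simp only [Set.mem_ofPred_eq, Set.nonempty_iUnion, Set.mem_iUnion]
  rw [hdom]
  exact InnerSemicompactAt.iUnion hcomp
end

section
/- If each component S_i : ℝ^m ⇉ ℝ^n (i = 1,…,l) of a set-valued map S whose graph is the union of the graphs of the S_i is inner calm* at ȳ with respect to dom S_i, then S is inner calm* at ȳ with respect to dom S (with constant κ = max_i κ_i). -/
open Filter Topology

/-- `S` is inner calm* at `yb` wrt `Ω` with constant `κ`. -/
def InnerCalmStarWithAt {E F : Type*} [NormedAddCommGroup E] [NormedAddCommGroup F]
    (S : E → Set F) (Ω : Set E) (yb : E) (κ : ℝ) : Prop :=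
  ∀ y : ℕ → E, (∀ k, y k ∈ Ω) → Tendsto y atTop (𝓝 yb) →
    ∃ φ : ℕ → ℕ, StrictMono φ ∧ ∃ x : ℕ → F, ∃ xb : F,
      (∀ k, x k ∈ S (y (φ k))) ∧ ∀ k, ‖x k - xb‖ ≤ κ * ‖y (φ k) - yb‖

/-! A sequence in `dom S` converging to `ȳ` meets one of the finitely many `dom Sᵢ` infinitely
often. Along that subsequence the inner calmness* of `Sᵢ` produces the required points, which
lie in `S` since `gph Sᵢ ⊆ gph S`, and `κᵢ ≤ maxᵢ κᵢ`. -/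

namespace InnerCalmStarWithAt

variable {E F : Type*} [NormedAddCommGroup E] [NormedAddCommGroup F]
  {S T : E → Set F} {Ω : Set E} {yb : E} {κ κ' : ℝ}

theorem mono (h : InnerCalmStarWithAt S Ω yb κ) (hST : ∀ y, S y ⊆ T y) (hκ : κ ≤ κ') :
    InnerCalmStarWithAt T Ω yb κ' := by
  intro y hy hty
  obtain ⟨φ, hφ, x, xb, hx, hbd⟩ := h y hy hty
  exact ⟨φ, hφ, x, xb, fun k => hST _ (hx k),
    fun k => (hbd k).trans (mul_le_mul_of_nonneg_right hκ (norm_nonneg _))⟩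

theorem exists_subseq_of_frequently (h : InnerCalmStarWithAt S Ω yb κ) {y : ℕ → E}
    (hy : ∃ᶠ k in atTop, y k ∈ Ω) (hty : Tendsto y atTop (𝓝 yb)) :
    ∃ φ : ℕ → ℕ, StrictMono φ ∧ ∃ x : ℕ → F, ∃ xb : F,
      (∀ k, x k ∈ S (y (φ k))) ∧ ∀ k, ‖x k - xb‖ ≤ κ * ‖y (φ k) - yb‖ := by
  obtain ⟨ψ, hψ, hψΩ⟩ := extraction_of_frequently_atTop hy
  obtain ⟨φ, hφ, x, xb, hx, hbd⟩ := h (y ∘ ψ) hψΩ (hty.comp hψ.tendsto_atTop)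
  exact ⟨ψ ∘ φ, hψ.comp hφ, x, xb, hx, hbd⟩

theorem iUnion {ι : Type*} [Finite ι] {S : ι → E → Set F} {Ω : ι → Set E} {κ : ι → ℝ}
    (h : ∀ i, InnerCalmStarWithAt (S i) (Ω i) yb (κ i)) (hκ : ∀ i, κ i ≤ κ') :
    InnerCalmStarWithAt (fun y => ⋃ i, S i y) (⋃ i, Ω i) yb κ' := by
  intro y hy hty
  have hfreq : ∃ i, ∃ᶠ k in atTop, y k ∈ Ω i :=
    frequently_exists.mp (Frequently.of_forall fun k => Set.mem_iUnion.mp (hy k))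
  obtain ⟨i, hi⟩ := hfreq
  exact ((h i).mono (fun y => Set.subset_iUnion (S · y) i) (hκ i)).exists_subseq_of_frequently
    hi hty

end InnerCalmStarWithAt

theorem stmt_5_general {m n l : ℕ}
    (S : EuclideanSpace ℝ (Fin m) → Set (EuclideanSpace ℝ (Fin n)))
    (Si : Fin (l + 1) → EuclideanSpace ℝ (Fin m) → Set (EuclideanSpace ℝ (Fin n)))
    (yb : EuclideanSpace ℝ (Fin m)) (κ : Fin (l + 1) → ℝ)
    (hgraph : ∀ y, S y = ⋃ i, Si i y)
    (hcalm : ∀ i, InnerCalmStarWithAt (Si i) {y | (Si i y).Nonempty} yb (κ i)) :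
    InnerCalmStarWithAt S {y | (S y).Nonempty} yb
      (Finset.univ.sup' Finset.univ_nonempty κ) := by
  have hS : S = fun y => ⋃ i, Si i y := funext hgraph
  have hdom : {y | (S y).Nonempty} = ⋃ i, {y | (Si i y).Nonempty} := by
    ext y
    simp [hgraph, Set.nonempty_iUnion]
  rw [hdom, hS]
  exact InnerCalmStarWithAt.iUnion hcalm fun i => Finset.le_sup' κ (Finset.mem_univ i)

/-- If each component `Si i` of `S` (whose graph is the union of the graphs of the
`Si i`) is inner calm* at `yb` wrt `dom (Si i)` with constant `κ i > 0`, then `S` is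
inner calm* at `yb` wrt `dom S` with constant `max_i κ i`. -/
theorem stmt_5 {m n l : ℕ}
    (S : EuclideanSpace ℝ (Fin m) → Set (EuclideanSpace ℝ (Fin n)))
    (Si : Fin (l + 1) → EuclideanSpace ℝ (Fin m) → Set (EuclideanSpace ℝ (Fin n)))
    (yb : EuclideanSpace ℝ (Fin m)) (κ : Fin (l + 1) → ℝ)
    (hgraph : ∀ y, S y = ⋃ i, Si i y)
    (hκ : ∀ i, 0 < κ i)
    (hcalm : ∀ i, InnerCalmStarWithAt (Si i) {y | (Si i y).Nonempty} yb (κ i)) :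
    InnerCalmStarWithAt S {y | (S y).Nonempty} yb
      (Finset.univ.sup' Finset.univ_nonempty κ) :=
  stmt_5_general S Si yb κ hgraph hcalm
end

section
/- Every polyhedral set-valued map S : ℝ^m ⇉ ℝ^n (one whose graph is a finite union of convex polyhedral sets) admits a single constant κ > 0 such that at every point ȳ ∈ dom S, S is inner calm* with constant κ with respect to dom S. -/
/-!
Each convex polyhedral piece of the graph is Lipschitz continuous on its domain (Walkup–Wets).
In the fibre this is Hoffman's error bound: project the point onto the polyhedron; by Farkas' lemma
the residual is a nonnegative combination of the active constraint normals, by Carathéodory one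
with linearly independent normals, and on linearly independent families the coefficients are
bounded by a constant times the norm of the combination. Squaring the residual against this
combination bounds it by the constraint violations.

Given `y k → ȳ` in the domain of `S`, infinitely many `y k` lie in the domain of one piece. A closed
set that is Lipschitz on its domain has a closed domain (follow a bounded sequence of selections),
so that piece has a point `(ȳ, x̄)`, and its Lipschitz estimate at `ȳ` supplies the `x k`.
-/

open Filter Topology

/-- A convex polyhedral set: a finite intersection of closed halfspaces. -/
def IsConvexPolyhedral {E : Type*} [NormedAddCommGroup E] [NormedSpace ℝ E]
    (C : Set E) : Prop :=
  ∃ (k : ℕ) (f : Fin k → (E →L[ℝ] ℝ)) (c : Fin k → ℝ), C = {x | ∀ i, f i x ≤ c i}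

/-- A polyhedral set: a finite union of convex polyhedral sets. -/
def IsPolyhedral {E : Type*} [NormedAddCommGroup E] [NormedSpace ℝ E]
    (A : Set E) : Prop :=
  ∃ (l : ℕ) (C : Fin l → Set E), (∀ i, IsConvexPolyhedral (C i)) ∧ A = ⋃ i, C i

open scoped RealInnerProductSpace
open Function

lemma linearIndepOn_iff_sum_smul_eq_zero {ι R M : Type*} [Fintype ι] [Ring R] [AddCommGroup M]
    [Module R M] (v : ι → M) {s : Set ι} :
    LinearIndepOn R v s ↔ ∀ g : ι → R, support g ⊆ s → ∑ i, g i • v i = 0 → g = 0 := by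
  classical
  have hsum : ∀ (t : Finset ι) (g : ι → R), (∀ i ∉ t, g i = 0) →
      ∑ i ∈ t, g i • v i = ∑ i, g i • v i := fun t g hg =>
    Finset.sum_subset t.subset_univ fun i _ hi => by rw [hg i hi, zero_smul]
  rw [linearIndepOn_iff'']
  constructor
  · intro h g hgs hg
    have hgs' : ∀ j ∉ s.toFinset, g j = 0 := fun j hj =>
      notMem_support.1 fun hj' => hj (by simpa using hgs hj')
    ext i
    by_cases hi : i ∈ s
    · exact h s.toFinset g (by simp) hgs' (by rwa [hsum _ _ hgs']) i (by simpa using hi)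
    · exact notMem_support.1 fun hi' => hi (hgs hi')
  · intro h t g hts hgt hg i _
    refine congr_fun (h g (fun j hj => hts ?_) (by rwa [← hsum t g hgt])) i
    by_contra hjt
    exact hj (hgt j hjt)

section Caratheodory

variable {ι 𝕜 M : Type*} [Fintype ι] [Field 𝕜] [LinearOrder 𝕜] [IsStrictOrderedRing 𝕜]
  [AddCommGroup M] [Module 𝕜 M] (a : ι → M)

lemma exists_nonneg_support_ssubset {μ g : ι → 𝕜} (hμ : 0 ≤ μ) (hgμ : support g ⊆ support μ)
    (hga : ∑ i, g i • a i = 0) {j : ι} (hj : 0 < g j) :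
    ∃ ν : ι → 𝕜, 0 ≤ ν ∧ support ν ⊂ support μ ∧ ∑ i, ν i • a i = ∑ i, μ i • a i := by
  classical
  obtain ⟨i₀, hi₀, hmin⟩ := Finset.exists_min_image {i | 0 < g i} (fun i => μ i / g i)
    ⟨j, by simpa using hj⟩
  rw [Finset.mem_filter_univ] at hi₀
  set t := μ i₀ / g i₀
  have ht : 0 ≤ t := div_nonneg (hμ i₀) hi₀.le
  refine ⟨μ - t • g, fun i => ?_, ?_, ?_⟩
  · have hμi : 0 ≤ μ i := hμ i
    simp only [Pi.zero_apply, Pi.sub_apply, Pi.smul_apply, smul_eq_mul]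
    rcases lt_or_ge 0 (g i) with hgi | hgi
    · have := hmin i (by simpa using hgi)
      rw [le_div_iff₀ hgi] at this
      linarith
    · linarith [mul_nonpos_of_nonneg_of_nonpos ht hgi]
  · refine Set.ssubset_iff_of_subset (fun i hi => ?_) |>.2 ⟨i₀, hgμ hi₀.ne', ?_⟩
    · by_contra hμi
      have hgi : g i = 0 := notMem_support.1 fun h => hμi (hgμ h)
      simp [notMem_support.1 hμi, hgi] at hi
    · simp [t, div_mul_cancel₀ _ hi₀.ne']
  · simp [sub_smul, mul_smul, Finset.sum_sub_distrib, ← Finset.smul_sum, hga]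

/-- Carathéodory's theorem for cones. -/
theorem exists_linearIndepOn_support (μ : ι → 𝕜) (hμ : 0 ≤ μ) :
    ∃ ν : ι → 𝕜, 0 ≤ ν ∧ support ν ⊆ support μ ∧ LinearIndepOn 𝕜 a (support ν) ∧
      ∑ i, ν i • a i = ∑ i, μ i • a i := by
  induction hs : support μ using WellFoundedLT.induction generalizing μ with
  | _ s ih =>
  subst hs
  by_cases hli : LinearIndepOn 𝕜 a (support μ)
  · exact ⟨μ, hμ, subset_rfl, hli, rfl⟩
  obtain ⟨g, hgμ, hga, j, hj⟩ :
      ∃ g : ι → 𝕜, support g ⊆ support μ ∧ ∑ i, g i • a i = 0 ∧ ∃ j, 0 < g j := by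
    rw [linearIndepOn_iff_sum_smul_eq_zero] at hli
    push Not at hli
    obtain ⟨g, hgμ, hga, hg⟩ := hli
    obtain ⟨j, hj⟩ := Function.ne_iff.1 hg
    rcases lt_or_gt_of_ne hj with hneg | hpos
    · exact ⟨-g, by rwa [support_neg], by simp [hga], j, by simpa using hneg⟩
    · exact ⟨g, hgμ, hga, j, hpos⟩
  obtain ⟨μ', hμ', hsub, hsum⟩ := exists_nonneg_support_ssubset a hμ hgμ hga hj
  obtain ⟨ν, hν, hνμ', hli, hνsum⟩ := ih _ hsub μ' hμ' rfl
  exact ⟨ν, hν, hνμ'.trans hsub.subset, hli, hνsum.trans hsum⟩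

end Caratheodory

section ConicHull

variable {ι E : Type*} [Fintype ι]

def conicHull [AddCommGroup E] [Module ℝ E] (a : ι → E) : PointedCone ℝ E :=
  (PointedCone.positive ℝ (ι → ℝ)).map (Fintype.linearCombination ℝ a)

lemma mem_conicHull [AddCommGroup E] [Module ℝ E] {a : ι → E} {v : E} :
    v ∈ conicHull a ↔ ∃ μ : ι → ℝ, 0 ≤ μ ∧ ∑ i, μ i • a i = v := by
  simp [conicHull, PointedCone.mem_map, PointedCone.mem_positive, Fintype.linearCombination_apply]

lemma mem_conicHull_self [AddCommGroup E] [Module ℝ E] (a : ι → E) (i : ι) :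
    a i ∈ conicHull a := by
  classical
  exact mem_conicHull.2 ⟨Pi.single i 1, Pi.single_nonneg.2 zero_le_one, by simp⟩

section Normed

variable [NormedAddCommGroup E] [NormedSpace ℝ E] (a : ι → E)

lemma LinearIndepOn.exists_norm_le {s : Set ι} (hs : LinearIndepOn ℝ a s) :
    ∃ K : ℝ, 0 ≤ K ∧ ∀ μ : ι → ℝ, support μ ⊆ s → ‖μ‖ ≤ K * ‖∑ i, μ i • a i‖ := by
  let p : Submodule ℝ (ι → ℝ) := Submodule.pi sᶜ fun _ => ⊥
  have hp {μ : ι → ℝ} : μ ∈ p ↔ support μ ⊆ s := by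
    simp [p, Submodule.mem_pi, Set.subset_def, not_imp_comm]
  let T := (Fintype.linearCombination ℝ a).domRestrict p
  have hT : LinearMap.ker T = ⊥ := LinearMap.ker_eq_bot'.2 fun μ hμ => Subtype.ext <|
    (linearIndepOn_iff_sum_smul_eq_zero a).1 hs μ (hp.1 μ.2) <| by
      simpa [T, Fintype.linearCombination_apply] using hμ
  obtain ⟨K, -, hK⟩ := T.exists_antilipschitzWith hT
  refine ⟨K, K.2, fun μ hμ => ?_⟩
  simpa [T, Fintype.linearCombination_apply] using hK.le_mul_dist ⟨μ, hp.2 hμ⟩ 0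

lemma exists_norm_le_of_linearIndepOn_support :
    ∃ c : ℝ, 0 ≤ c ∧ ∀ μ : ι → ℝ, LinearIndepOn ℝ a (support μ) →
      ‖μ‖ ≤ c * ‖∑ i, μ i • a i‖ := by
  classical
  have : ∀ s : Set ι, ∃ K : ℝ, 0 ≤ K ∧ (LinearIndepOn ℝ a s →
      ∀ μ : ι → ℝ, support μ ⊆ s → ‖μ‖ ≤ K * ‖∑ i, μ i • a i‖) := fun s => by
    by_cases hs : LinearIndepOn ℝ a s
    · obtain ⟨K, hK0, hK⟩ := hs.exists_norm_le a
      exact ⟨K, hK0, fun _ => hK⟩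
    · exact ⟨0, le_rfl, fun h => absurd h hs⟩
  choose K hK0 hK using this
  refine ⟨∑ s, K s, Finset.sum_nonneg fun s _ => hK0 s, fun μ hμ => ?_⟩
  calc ‖μ‖ ≤ K (support μ) * ‖∑ i, μ i • a i‖ := hK _ hμ μ subset_rfl
    _ ≤ (∑ s, K s) * ‖∑ i, μ i • a i‖ := by
      gcongr
      exact Finset.single_le_sum (fun s _ => hK0 s) (Finset.mem_univ _)

lemma isClosed_conicHull : IsClosed (conicHull a : Set E) := by
  obtain ⟨c, hc0, hc⟩ := exists_norm_le_of_linearIndepOn_support a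
  refine IsSeqClosed.isClosed fun v v₀ hv hv₀ => ?_
  have : ∀ n, ∃ μ : ι → ℝ, 0 ≤ μ ∧ LinearIndepOn ℝ a (support μ) ∧ ∑ i, μ i • a i = v n := by
    intro n
    obtain ⟨μ, hμ, hμv⟩ := mem_conicHull.1 (hv n)
    obtain ⟨ν, hν, -, hli, hνμ⟩ := exists_linearIndepOn_support a μ hμ
    exact ⟨ν, hν, hli, hνμ.trans hμv⟩
  choose μ hμ hli hμv using this
  obtain ⟨R, hR⟩ := isBounded_iff_forall_norm_le.1 (Metric.isBounded_range_of_tendsto v hv₀)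
  have hμR : ∀ n, μ n ∈ Metric.closedBall 0 (c * R) := fun n => by
    rw [mem_closedBall_zero_iff]
    exact (hc _ (hli n)).trans <| by
      rw [hμv]
      gcongr
      exact hR _ ⟨n, rfl⟩
  obtain ⟨μ₀, -, φ, hφ, hlim⟩ := tendsto_subseq_of_bounded Metric.isBounded_closedBall hμR
  refine mem_conicHull.2 ⟨μ₀, isClosed_Ici.mem_of_tendsto hlim (.of_forall fun n => hμ (φ n)), ?_⟩
  have hT := ((Fintype.linearCombination ℝ a).continuous_of_finiteDimensional.tendsto μ₀).comp hlim
  refine tendsto_nhds_unique (f := v ∘ φ) ?_ (hv₀.comp hφ.tendsto_atTop)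
  simpa [Function.comp_def, Fintype.linearCombination_apply, hμv] using hT

end Normed

section Inner

variable [NormedAddCommGroup E] [InnerProductSpace ℝ E] (a : ι → E)

/-- Farkas' lemma. -/
theorem mem_conicHull_of_forall_inner_nonpos [CompleteSpace E] {v : E}
    (hv : ∀ d, (∀ i, ⟪a i, d⟫ ≤ 0) → ⟪v, d⟫ ≤ 0) : v ∈ conicHull a := by
  by_contra hva
  obtain ⟨y, hC, hvy⟩ :=
    ProperCone.hyperplane_separation' (⟨conicHull a, isClosed_conicHull a⟩ : ProperCone ℝ E) hva
  have := hv (-y) fun i => by simpa [inner_neg_right] using hC (a i) (mem_conicHull_self a i)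
  rw [inner_neg_right] at this
  linarith

end Inner

end ConicHull

section Polyhedron

variable {ι E : Type*} [NormedAddCommGroup E] [InnerProductSpace ℝ E] (a : ι → E) (b : ι → ℝ)

lemma isClosed_setOf_forall_inner_le : IsClosed {w : E | ∀ i, ⟪a i, w⟫ ≤ b i} := by
  simp only [Set.ofPred_forall]
  exact isClosed_iInter fun i => isClosed_le (continuous_const.inner continuous_id) continuous_const

lemma convex_setOf_forall_inner_le : Convex ℝ {w : E | ∀ i, ⟪a i, w⟫ ≤ b i} := by
  simp only [Set.ofPred_forall]
  exact convex_iInter fun i => convex_halfSpace_le (innerₛₗ ℝ (a i)).isLinear (b i)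

variable [Fintype ι] {a b}

lemma exists_pos_add_smul_mem_of_active {x d : E} (hx : ∀ i, ⟪a i, x⟫ ≤ b i)
    (hd : ∀ i, ⟪a i, x⟫ = b i → ⟪a i, d⟫ ≤ 0) :
    ∃ ε : ℝ, 0 < ε ∧ ∀ i, ⟪a i, x + ε • d⟫ ≤ b i := by
  have : ∀ i, ∀ᶠ ε in 𝓝[>] (0 : ℝ), ⟪a i, x + ε • d⟫ ≤ b i := by
    intro i
    rcases (hx i).lt_or_eq with hlt | heq
    · have hcont : Tendsto (fun ε : ℝ => ⟪a i, x + ε • d⟫) (𝓝 0) (𝓝 ⟪a i, x⟫) := by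
        have : Continuous fun ε : ℝ => ⟪a i, x + ε • d⟫ := by fun_prop
        simpa using this.tendsto 0
      exact ((hcont.eventually_lt_const hlt).filter_mono nhdsWithin_le_nhds).mono
        fun _ => le_of_lt
    · filter_upwards [self_mem_nhdsWithin] with ε hε
      rw [inner_add_right, real_inner_smul_right, heq]
      linarith [mul_nonpos_of_nonneg_of_nonpos (le_of_lt hε) (hd i heq)]
  obtain ⟨ε, hεK, hε⟩ := ((eventually_all.2 this).and self_mem_nhdsWithin).exists
  exact ⟨ε, hε, hεK⟩

theorem exists_active_multipliers_of_normal [CompleteSpace E] {x' v : E}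
    (hx' : ∀ i, ⟪a i, x'⟫ ≤ b i) (hv : ∀ w, (∀ i, ⟪a i, w⟫ ≤ b i) → ⟪v, w - x'⟫ ≤ 0) :
    ∃ ν : ι → ℝ, 0 ≤ ν ∧ (∀ i, ν i ≠ 0 → ⟪a i, x'⟫ = b i) ∧ LinearIndepOn ℝ a (support ν) ∧
      ∑ i, ν i • a i = v := by
  classical
  set I := {i | ⟪a i, x'⟫ = b i}
  have hvI : v ∈ conicHull (I.indicator a) := by
    refine mem_conicHull_of_forall_inner_nonpos _ fun d hd => ?_
    obtain ⟨ε, hε, hεK⟩ := exists_pos_add_smul_mem_of_active hx' fun i hi => by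
      simpa [I, hi] using hd i
    have := hv _ hεK
    rw [add_sub_cancel_left, real_inner_smul_right] at this
    exact nonpos_of_mul_nonpos_right this hε
  obtain ⟨μ, hμ, hμv⟩ := mem_conicHull.1 hvI
  obtain ⟨ν, hν, hνμ, hli, hνv⟩ :=
    exists_linearIndepOn_support a (I.indicator μ) (Set.indicator_nonneg fun i _ => hμ i)
  refine ⟨ν, hν, fun i hi => Set.support_indicator_subset (s := I) (hνμ hi), hli, ?_⟩
  rw [hνv, ← hμv]
  simp only [← Set.indicator_smul_apply_left, Set.indicator_smul_apply]

variable (a) in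
/-- Hoffman's error bound. -/
theorem exists_hoffman_constant [FiniteDimensional ℝ E] :
    ∃ c : ℝ, 0 ≤ c ∧ ∀ (b : ι → ℝ) (x : E), {w | ∀ i, ⟪a i, w⟫ ≤ b i}.Nonempty →
      ∃ x', (∀ i, ⟪a i, x'⟫ ≤ b i) ∧ ‖x - x'‖ ≤ c * ∑ i, max (⟪a i, x⟫ - b i) 0 := by
  obtain ⟨c, hc0, hc⟩ := exists_norm_le_of_linearIndepOn_support a
  refine ⟨c, hc0, fun b x hK => ?_⟩
  obtain ⟨x', hx', hproj⟩ := exists_norm_eq_iInf_of_complete_convex hK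
    (isClosed_setOf_forall_inner_le a b).isComplete (convex_setOf_forall_inner_le a b) x
  obtain ⟨ν, hν, hνact, hli, hνv⟩ := exists_active_multipliers_of_normal hx'
    ((norm_eq_iInf_iff_real_inner_le_zero (convex_setOf_forall_inner_le a b) hx').1 hproj)
  set v := x - x'
  set r := fun i => max (⟪a i, x⟫ - b i) 0
  have hνr : ∀ i, ν i * ⟪a i, v⟫ ≤ c * ‖v‖ * r i := fun i => by
    by_cases hνi : ν i = 0
    · simp only [hνi, zero_mul, r]
      positivity
    have hav : ⟪a i, v⟫ = ⟪a i, x⟫ - b i := by rw [inner_sub_right, hνact i hνi]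
    calc ν i * ⟪a i, v⟫ ≤ ν i * r i := mul_le_mul_of_nonneg_left (hav ▸ le_max_left _ _) (hν i)
      _ ≤ c * ‖v‖ * r i := by
        refine mul_le_mul_of_nonneg_right ?_ (le_max_right _ _)
        calc ν i ≤ ‖ν‖ := (le_abs_self _).trans (norm_le_pi_norm ν i)
          _ ≤ c * ‖v‖ := hνv ▸ hc ν hli
  have hsq : ‖v‖ * ‖v‖ ≤ c * ‖v‖ * ∑ i, r i := calc
    ‖v‖ * ‖v‖ = ⟪v, v⟫ := (real_inner_self_eq_norm_mul_norm v).symm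
    _ = ⟪∑ i, ν i • a i, v⟫ := by rw [hνv]
    _ = ∑ i, ν i * ⟪a i, v⟫ := by simp [sum_inner, real_inner_smul_left]
    _ ≤ ∑ i, c * ‖v‖ * r i := Finset.sum_le_sum fun i _ => hνr i
    _ = c * ‖v‖ * ∑ i, r i := by rw [Finset.mul_sum]
  refine ⟨x', hx', ?_⟩
  rcases (norm_nonneg v).eq_or_lt with h0 | hpos
  · rw [← h0]
    exact mul_nonneg hc0 (Finset.sum_nonneg fun i _ => le_max_right _ _)
  · nlinarith

end Polyhedron

lemma IsConvexPolyhedral.isClosed {E : Type*} [NormedAddCommGroup E] [NormedSpace ℝ E]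
    {C : Set E} (hC : IsConvexPolyhedral C) : IsClosed C := by
  obtain ⟨k, f, c, rfl⟩ := hC
  simp only [Set.ofPred_forall]
  exact isClosed_iInter fun i => isClosed_le (f i).continuous continuous_const

section LipschitzOnDom

variable {Y X : Type*} [NormedAddCommGroup Y] [NormedAddCommGroup X]

/-- Lipschitz continuity on its domain of the set-valued map whose graph is `C`. -/
def LipschitzOnDomWith (κ : ℝ) (C : Set (Y × X)) : Prop :=
  ∀ ⦃y x y' x'⦄, (y, x) ∈ C → (y', x') ∈ C → ∃ x'', (y', x'') ∈ C ∧ ‖x'' - x‖ ≤ κ * ‖y' - y‖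

/-- The Walkup–Wets theorem. -/
theorem IsConvexPolyhedral.exists_lipschitzOnDomWith [NormedSpace ℝ Y] [InnerProductSpace ℝ X]
    [FiniteDimensional ℝ X] {C : Set (Y × X)} (hC : IsConvexPolyhedral C) :
    ∃ κ, 0 ≤ κ ∧ LipschitzOnDomWith κ C := by
  obtain ⟨k, f, c, rfl⟩ := hC
  set a : Fin k → X := fun i => (InnerProductSpace.toDual ℝ X).symm ((f i).comp (.inr ℝ Y X))
  have hf : ∀ i y x, f i (y, x) = f i (y, 0) + ⟪a i, x⟫ := fun i y x => by
    simp [a, InnerProductSpace.toDual_symm_apply, ← map_add]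
  obtain ⟨c₀, hc₀, hoffman⟩ := exists_hoffman_constant a
  refine ⟨c₀ * ∑ i, ‖f i‖, by positivity, fun yb xb y' x' hb h' => ?_⟩
  obtain ⟨x'', hx'', hdist⟩ := hoffman (fun i => c i - f i (y', 0)) xb
    ⟨x', fun i => by linarith [h' i, hf i y' x']⟩
  refine ⟨x'', fun i => by linarith [hx'' i, hf i y' x''], ?_⟩
  have hres : ∀ i, max (⟪a i, xb⟫ - (c i - f i (y', 0))) 0 ≤ ‖f i‖ * ‖y' - yb‖ := fun i => by
    refine max_le ?_ (by positivity)
    have hlip : f i (y', xb) - f i (yb, xb) ≤ ‖f i‖ * ‖y' - yb‖ :=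
      calc f i (y', xb) - f i (yb, xb) = f i (y' - yb, 0) := by rw [← map_sub]; simp
        _ ≤ ‖f i‖ * ‖((y' - yb, 0) : Y × X)‖ := (le_abs_self _).trans ((f i).le_opNorm _)
        _ = ‖f i‖ * ‖y' - yb‖ := by simp [Prod.norm_def]
    linarith [hb i, hf i y' xb]
  calc ‖x'' - xb‖ = ‖xb - x''‖ := norm_sub_rev _ _
    _ ≤ c₀ * ∑ i, max (⟪a i, xb⟫ - (c i - f i (y', 0))) 0 := hdist
    _ ≤ c₀ * ∑ i, ‖f i‖ * ‖y' - yb‖ := by gcongr with i; exact hres i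
    _ = c₀ * (∑ i, ‖f i‖) * ‖y' - yb‖ := by rw [← Finset.sum_mul, mul_assoc]

variable [ProperSpace X] {κ : ℝ} {C : Set (Y × X)}

lemma LipschitzOnDomWith.isClosed_dom (hC : LipschitzOnDomWith κ C) (hκ : 0 ≤ κ)
    (hcl : IsClosed C) : IsClosed {y | ∃ x, (y, x) ∈ C} := by
  refine IsSeqClosed.isClosed fun y yb hy hlim => ?_
  obtain ⟨x₀, hx₀⟩ := hy 0
  have : ∀ n, ∃ z, (y n, z) ∈ C ∧ ‖z - x₀‖ ≤ κ * ‖y n - y 0‖ := fun n =>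
    (hy n).elim fun _ hx => hC hx₀ hx
  choose z hzC hz using this
  obtain ⟨R, hR⟩ := isBounded_iff_forall_norm_le.1
    (Metric.isBounded_range_of_tendsto _ (hlim.sub_const (y 0)))
  have hzR : ∀ n, z n ∈ Metric.closedBall x₀ (κ * R) := fun n => by
    rw [mem_closedBall_iff_norm]
    exact (hz n).trans (by gcongr; exact hR _ ⟨n, rfl⟩)
  obtain ⟨xb, -, φ, hφ, hzφ⟩ := tendsto_subseq_of_bounded Metric.isBounded_closedBall hzR
  exact ⟨xb, hcl.mem_of_tendsto ((hlim.comp hφ.tendsto_atTop).prodMk_nhds hzφ)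
    (.of_forall fun n => hzC (φ n))⟩

lemma LipschitzOnDomWith.exists_forall_norm_sub_le (hC : LipschitzOnDomWith κ C) (hκ : 0 ≤ κ)
    (hcl : IsClosed C) {y : ℕ → Y} {yb : Y} (hy : ∀ n, ∃ x, (y n, x) ∈ C)
    (hlim : Tendsto y atTop (𝓝 yb)) :
    ∃ xb : X, ∃ x : ℕ → X, ∀ n, (y n, x n) ∈ C ∧ ‖x n - xb‖ ≤ κ * ‖y n - yb‖ := by
  obtain ⟨xb, hxb⟩ := (hC.isClosed_dom hκ hcl).mem_of_tendsto hlim (.of_forall hy)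
  choose x hx using fun n => (hy n).elim fun _ hx => hC hxb hx
  exact ⟨xb, x, hx⟩

end LipschitzOnDom

/-- Every polyhedral set-valued map admits a single constant `κ > 0` such that it is
inner calm* with constant `κ` wrt its domain at every point of its domain. -/
theorem stmt_6 {m n : ℕ}
    (S : EuclideanSpace ℝ (Fin m) → Set (EuclideanSpace ℝ (Fin n)))
    (hpoly : IsPolyhedral
      {p : EuclideanSpace ℝ (Fin m) × EuclideanSpace ℝ (Fin n) | p.2 ∈ S p.1}) :
    ∃ κ : ℝ, 0 < κ ∧ ∀ yb ∈ {y | (S y).Nonempty},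
      InnerCalmStarWithAt S {y | (S y).Nonempty} yb κ := by
  obtain ⟨l, C, hC, hgraph⟩ := hpoly
  choose κ hκ0 hκ using fun i => (hC i).exists_lipschitzOnDomWith
  have hκle : ∀ i, κ i ≤ ∑ j, κ j + 1 := fun i => by
    linarith [Finset.single_le_sum (fun j _ => hκ0 j) (Finset.mem_univ i)]
  refine ⟨∑ i, κ i + 1, add_pos_of_nonneg_of_pos (Finset.sum_nonneg fun j _ => hκ0 j) one_pos,
    fun yb _ y hy hlim => ?_⟩
  have hpiece : ∀ k, ∃ i, ∃ x, (y k, x) ∈ C i := fun k => by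
    obtain ⟨x, hx⟩ := hy k
    obtain ⟨i, hi⟩ := Set.mem_iUnion.1 (hgraph ▸ hx : (y k, x) ∈ ⋃ i, C i)
    exact ⟨i, x, hi⟩
  obtain ⟨i, hfreq⟩ := frequently_exists.1 (Frequently.of_forall (f := atTop) hpiece)
  obtain ⟨φ, hφ, hφi⟩ := extraction_of_frequently_atTop hfreq
  obtain ⟨xb, x, hx⟩ := (hκ i).exists_forall_norm_sub_le (hκ0 i) (hC i).isClosed hφi
    (hlim.comp hφ.tendsto_atTop)
  refine ⟨φ, hφ, x, xb, fun k => ?_, fun k => ?_⟩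
  · change (y (φ k), x k) ∈ {p | p.2 ∈ S p.1}
    rw [hgraph]
    exact Set.mem_iUnion.2 ⟨i, (hx k).1⟩
  · exact (hx k).2.trans (mul_le_mul_of_nonneg_right (hκle i) (norm_nonneg _))
end

section
/- Let D ⊆ ℝ^s be a convex polyhedral set and z̄* ∈ N_D(z̄). Then there is a neighbourhood O of 0 in ℝ^s × ℝ^s such that (gph N_D − (z̄, z̄*)) ∩ O = {(w, w*) : w ∈ K, w* ∈ K°, ⟨w, w*⟩ = 0} ∩ O, where K = T_D(z̄) ∩ [z̄*]^⊥ is the critical cone. -/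
open Filter Topology

/-- The tangent (contingent) cone to `Ω` at `x`. -/
def SeqTangent {E : Type*} [NormedAddCommGroup E] [NormedSpace ℝ E]
    (Ω : Set E) (x : E) : Set E :=
  {u | ∃ t : ℕ → ℝ, ∃ w : ℕ → E, (∀ k, 0 < t k) ∧ Tendsto t atTop (𝓝 0) ∧
    Tendsto w atTop (𝓝 u) ∧ ∀ k, x + t k • w k ∈ Ω}

/-- The normal cone of convex analysis to `D` at `z` (empty if `z ∉ D`). -/
def ConvNormal {E : Type*} [NormedAddCommGroup E] [InnerProductSpace ℝ E]
    (D : Set E) (z : E) : Set E :=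
  {v | z ∈ D ∧ ∀ w ∈ D, (inner ℝ v (w - z) : ℝ) ≤ 0}

/-- The (negative) polar cone of `K`. -/
def PolarCone {E : Type*} [NormedAddCommGroup E] [InnerProductSpace ℝ E]
    (K : Set E) : Set E :=
  {v | ∀ w ∈ K, (inner ℝ v w : ℝ) ≤ 0}

/-!
Near `z̄` the polyhedron `D` agrees with `z̄ + T`, where `T = T_D(z̄)` is cut out by the active
constraints; hence near `(0, z̄*)` the shifted graph of `N_D` is the graph of `N_T`, i.e. the pairs
`(w, v)` with `w ∈ T`, `v ∈ T°` and `⟨v, w⟩ = 0`. By Farkas, `T°` is the cone `C` generated by the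
active normals, and by Carathéodory `C` is a finite union of simplicial cones. Continuity of the
coordinates on each simplicial cone shows that `v - z̄*/2 ∈ C` for every `v ∈ C` near `z̄*`. This
yields both that `⟨v, w⟩ = 0` with `w ∈ T` and `v ∈ C` near `z̄*` forces `⟨z̄*, w⟩ = 0`, and that
near `z̄*` the cone `C` agrees with `z̄* + K°`, where `K° = C + ℝ z̄*`.
-/

open RealInnerProductSpace

section ConeHull

variable {ι κ E : Type*} [AddCommGroup E] [Module ℝ E]

def coneHull [Fintype ι] (b : ι → E) : PointedCone ℝ E :=
  (PointedCone.positive ℝ (ι → ℝ)).map (Fintype.linearCombination ℝ b)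

lemma mem_coneHull_iff_linearCombination [Fintype ι] {b : ι → E} {x : E} :
    x ∈ coneHull b ↔ ∃ μ : ι → ℝ, 0 ≤ μ ∧ Fintype.linearCombination ℝ b μ = x := by
  simp [coneHull, PointedCone.mem_map]

lemma mem_coneHull [Fintype ι] {b : ι → E} {x : E} :
    x ∈ coneHull b ↔ ∃ μ : ι → ℝ, 0 ≤ μ ∧ ∑ i, μ i • b i = x := by
  simp [mem_coneHull_iff_linearCombination, Fintype.linearCombination_apply]

lemma apply_mem_coneHull [Fintype ι] (b : ι → E) (i : ι) : b i ∈ coneHull b := by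
  classical
  exact mem_coneHull.2 ⟨Pi.single i 1, Pi.single_nonneg.2 zero_le_one, by simp⟩

lemma coneHull_comp_subset [Fintype ι] [Fintype κ] (b : ι → E) {e : κ → ι}
    (he : Function.Injective e) :
    (coneHull (b ∘ e) : Set E) ⊆ coneHull b := by
  classical
  intro x hx
  obtain ⟨μ, hμ, rfl⟩ := mem_coneHull.1 hx
  refine mem_coneHull.2 ⟨Function.extend e μ 0, fun i => ?_, ?_⟩
  · by_cases hi : ∃ j, e j = i
    · obtain ⟨j, rfl⟩ := hi
      simpa [he.extend_apply] using hμ j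
    · simp [Function.extend_apply' _ _ _ hi]
  · refine (Fintype.sum_of_injective e he _ _ (fun i hi => ?_) fun j => ?_).symm
    · simp [Function.extend_apply' _ _ _ hi]
    · simp [he.extend_apply]

variable (b : ι → E)

lemma exists_sum_erase_eq_of_not_linearIndepOn [DecidableEq ι] {s : Finset ι} {μ : ι → ℝ}
    (hμ : ∀ i ∈ s, 0 ≤ μ i) (hs : ¬ LinearIndepOn ℝ b s) :
    ∃ i ∈ s, ∃ ν : ι → ℝ, (∀ j ∈ s.erase i, 0 ≤ ν j) ∧
      ∑ j ∈ s.erase i, ν j • b j = ∑ j ∈ s, μ j • b j := by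
  obtain ⟨g, hg, j, hjs, hgj⟩ : ∃ g : ι → ℝ, ∑ i ∈ s, g i • b i = 0 ∧ ∃ j ∈ s, 0 < g j := by
    obtain ⟨f, hf, j, hjs, hfj⟩ := not_linearIndepOn_finset_iff.1 hs
    rcases hfj.lt_or_gt with hneg | hpos
    · exact ⟨-f, by simp [hf], j, hjs, by simpa⟩
    · exact ⟨f, hf, j, hjs, hpos⟩
  obtain ⟨i, hi, hmin⟩ := (s.filter (0 < g ·)).exists_min_image (fun i => μ i / g i)
    ⟨j, Finset.mem_filter.2 ⟨hjs, hgj⟩⟩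
  obtain ⟨his, hgi⟩ := Finset.mem_filter.1 hi
  set θ := μ i / g i
  have hθ : 0 ≤ θ := div_nonneg (hμ i his) hgi.le
  refine ⟨i, his, fun j => μ j - θ * g j, fun j hj => ?_, ?_⟩
  · have hjs := Finset.mem_of_mem_erase hj
    rcases le_or_gt (g j) 0 with hgj | hgj
    · nlinarith [hμ j hjs]
    · have := hmin j (Finset.mem_filter.2 ⟨hjs, hgj⟩)
      rw [le_div_iff₀ hgj] at this
      linarith
  · rw [Finset.sum_erase _ (by simp only [θ, div_mul_cancel₀ _ hgi.ne', sub_self, zero_smul])]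
    simp only [sub_smul, mul_smul, Finset.sum_sub_distrib, ← Finset.smul_sum, hg, smul_zero,
      sub_zero]

lemma exists_linearIndepOn_sum_mem_coneHull (s : Finset ι) {μ : ι → ℝ}
    (hμ : ∀ i ∈ s, 0 ≤ μ i) :
    ∃ t ⊆ s, LinearIndepOn ℝ b t ∧ ∑ i ∈ s, μ i • b i ∈ coneHull (fun i : t => b i) := by
  classical
  induction s using Finset.strongInduction generalizing μ with
  | H s ih =>
    by_cases hs : LinearIndepOn ℝ b s
    · exact ⟨s, subset_rfl, hs,
        mem_coneHull.2 ⟨fun i => μ i, fun i => hμ i i.2, Finset.sum_coe_sort s fun i => μ i • b i⟩⟩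
    obtain ⟨i, his, ν, hν, hsum⟩ := exists_sum_erase_eq_of_not_linearIndepOn b hμ hs
    obtain ⟨t, hts, ht, hmem⟩ := ih _ (Finset.erase_ssubset his) hν
    exact ⟨t, hts.trans (Finset.erase_subset _ _), ht, hsum ▸ hmem⟩

lemma exists_linearIndepOn_mem_coneHull [Fintype ι] {x : E} (hx : x ∈ coneHull b) :
    ∃ t : Finset ι, LinearIndepOn ℝ b t ∧ x ∈ coneHull (fun i : t => b i) := by
  obtain ⟨μ, hμ, rfl⟩ := mem_coneHull.1 hx
  obtain ⟨t, -, ht, hmem⟩ := exists_linearIndepOn_sum_mem_coneHull b Finset.univ fun i _ => hμ i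
  exact ⟨t, ht, hmem⟩

end ConeHull

section Topology

variable {ι E : Type*} [Fintype ι] [NormedAddCommGroup E] [NormedSpace ℝ E] {b : ι → E}

lemma LinearIndependent.isClosed_coneHull (hb : LinearIndependent ℝ b) :
    IsClosed (coneHull b : Set E) := by
  have : (coneHull b : Set E) = Fintype.linearCombination ℝ b '' Set.Ici 0 := by
    ext x; simp [mem_coneHull_iff_linearCombination]
  rw [this]
  exact (LinearMap.isClosedEmbedding_of_injective (LinearMap.ker_eq_bot.2
    hb.fintypeLinearCombination_injective)).isClosedMap _ isClosed_Ici

variable (b) in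
lemma isClosed_coneHull : IsClosed (coneHull b : Set E) := by
  have : (coneHull b : Set E) =
      ⋃ t : {t : Finset ι // LinearIndepOn ℝ b t}, coneHull (fun i : t.1 => b i) := by
    refine subset_antisymm (fun x hx => ?_)
      (Set.iUnion_subset fun t => coneHull_comp_subset b Subtype.val_injective)
    obtain ⟨t, ht, hxt⟩ := exists_linearIndepOn_mem_coneHull b hx
    exact Set.mem_iUnion.2 ⟨⟨t, ht⟩, hxt⟩
  rw [this]
  exact isClosed_iUnion_of_finite fun t => LinearIndependent.isClosed_coneHull t.2

variable [FiniteDimensional ℝ E]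

/-- The coordinates of `v` are close to those of `z`, hence at least half of them. -/
lemma LinearIndependent.eventually_sub_half_smul_mem_coneHull (hb : LinearIndependent ℝ b)
    (z : E) : ∀ᶠ v in 𝓝 z, v ∈ coneHull b → v - (2⁻¹ : ℝ) • z ∈ coneHull b := by
  by_cases hz : z ∈ coneHull b
  swap
  · filter_upwards [hb.isClosed_coneHull.isOpen_compl.mem_nhds hz] with v hv h using
      absurd h hv
  set L := Fintype.linearCombination ℝ b
  obtain ⟨g, hg⟩ := L.exists_leftInverse_of_injective
    (LinearMap.ker_eq_bot.2 hb.fintypeLinearCombination_injective)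
  have hgL : ∀ μ, g (L μ) = μ := fun μ => LinearMap.congr_fun hg μ
  obtain ⟨μ, hμ, rfl⟩ := mem_coneHull_iff_linearCombination.1 hz
  have hcoord : ∀ᶠ v in 𝓝 (L μ), ∀ i, 0 < μ i → μ i / 2 < g v i := by
    refine eventually_all.2 fun i => eventually_imp_distrib_left.2 fun hi => ?_
    have hcont : Continuous fun v => g v i :=
      (continuous_apply i).comp g.continuous_of_finiteDimensional
    exact hcont.continuousAt.eventually_const_lt (by simp only [hgL]; linarith)
  filter_upwards [hcoord] with v hv hvC
  obtain ⟨ν, hν, rfl⟩ := mem_coneHull_iff_linearCombination.1 hvC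
  refine mem_coneHull_iff_linearCombination.2
    ⟨ν - (2⁻¹ : ℝ) • μ, fun i => ?_, by simp only [map_sub, map_smul]⟩
  have hνi : 0 ≤ ν i := hν i
  have := hv i
  rw [hgL] at this
  simp only [Pi.zero_apply, Pi.sub_apply, Pi.smul_apply, smul_eq_mul]
  rcases (hμ i).lt_or_eq with hpos | hzero
  · linarith [this hpos]
  · simpa [← hzero] using hνi

variable (b) in
lemma eventually_sub_half_smul_mem_coneHull (z : E) :
    ∀ᶠ v in 𝓝 z, v ∈ coneHull b → v - (2⁻¹ : ℝ) • z ∈ coneHull b := by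
  have : ∀ᶠ v in 𝓝 z, ∀ t : Finset ι, LinearIndepOn ℝ b t →
      v ∈ coneHull (fun i : t => b i) → v - (2⁻¹ : ℝ) • z ∈ coneHull (fun i : t => b i) :=
    eventually_all.2 fun t => eventually_imp_distrib_left.2 fun ht =>
      LinearIndependent.eventually_sub_half_smul_mem_coneHull ht z
  filter_upwards [this] with v hv hvC
  obtain ⟨t, ht, hvt⟩ := exists_linearIndepOn_mem_coneHull b hvC
  exact coneHull_comp_subset b Subtype.val_injective (hv t ht hvt)

end Topology

section Polar

variable {E : Type*} [NormedAddCommGroup E] [InnerProductSpace ℝ E]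

lemma mem_polarCone_range {ι : Type*} {b : ι → E} {v : E} :
    v ∈ PolarCone (Set.range b) ↔ ∀ i, ⟪v, b i⟫ ≤ 0 := by
  simp [PolarCone]

lemma zero_mem_polarCone (s : Set E) : (0 : E) ∈ PolarCone s := by
  simp [PolarCone]

lemma add_mem_polarCone {s : Set E} {v w : E} (hv : v ∈ PolarCone s) (hw : w ∈ PolarCone s) :
    v + w ∈ PolarCone s := fun u hu => by
  rw [inner_add_left]; linarith [hv u hu, hw u hu]

lemma smul_mem_polarCone {s : Set E} {v : E} {t : ℝ} (ht : 0 ≤ t) (hv : v ∈ PolarCone s) :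
    t • v ∈ PolarCone s := fun u hu => by
  rw [real_inner_smul_left]; exact mul_nonpos_of_nonneg_of_nonpos ht (hv u hu)

lemma isClosed_polarCone (s : Set E) : IsClosed (PolarCone s) := by
  simp only [PolarCone, Set.ofPred_forall]
  exact isClosed_biInter fun w _ => isClosed_le (by fun_prop) continuous_const

lemma convex_polarCone (s : Set E) : Convex ℝ (PolarCone s) := fun _ hv _ hw _ _ ha hb _ =>
  add_mem_polarCone (smul_mem_polarCone ha hv) (smul_mem_polarCone hb hw)

lemma mem_convNormal_polarCone_iff {s : Set E} {v w : E} :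
    v ∈ ConvNormal (PolarCone s) w ↔
      w ∈ PolarCone s ∧ v ∈ PolarCone (PolarCone s) ∧ ⟪v, w⟫ = 0 := by
  constructor
  · rintro ⟨hw, hv⟩
    have hpol : v ∈ PolarCone (PolarCone s) := fun u hu => by
      simpa using hv (w + u) (add_mem_polarCone hw hu)
    have := hv 0 (zero_mem_polarCone s)
    rw [zero_sub, inner_neg_right] at this
    exact ⟨hw, hpol, le_antisymm (hpol w hw) (by linarith)⟩
  · rintro ⟨hw, hv, hvw⟩
    exact ⟨hw, fun u hu => by rw [inner_sub_right, hvw, sub_zero]; exact hv u hu⟩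

variable {ι : Type*} [Fintype ι] [FiniteDimensional ℝ E]

lemma polarCone_polarCone_range (b : ι → E) :
    PolarCone (PolarCone (Set.range b)) = coneHull b := by
  refine subset_antisymm (fun x hx => ?_) fun x hx w hw => ?_
  · by_contra hxC
    obtain ⟨y, hy, hxy⟩ :=
      ProperCone.hyperplane_separation' (⟨coneHull b, isClosed_coneHull b⟩ : ProperCone ℝ E) hxC
    have hneg : -y ∈ PolarCone (Set.range b) := mem_polarCone_range.2 fun i => by
      rw [inner_neg_left, neg_nonpos, real_inner_comm]
      exact hy (b i) (apply_mem_coneHull b i)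
    have := hx _ hneg
    rw [inner_neg_right, neg_nonpos] at this
    linarith
  · obtain ⟨μ, hμ, rfl⟩ := mem_coneHull.1 hx
    rw [sum_inner]
    refine Finset.sum_nonpos fun i _ => ?_
    rw [real_inner_smul_left, real_inner_comm]
    exact mul_nonpos_of_nonneg_of_nonpos (hμ i) (mem_polarCone_range.1 hw i)

lemma polarCone_inter_orthogonal_subset (b : ι → E) (z : E) :
    PolarCone (PolarCone (Set.range b) ∩ {w | ⟪z, w⟫ = 0}) ⊆
      {v | ∃ q ∈ coneHull b, ∃ r : ℝ, v = q + r • z} := by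
  have hK : PolarCone (Set.range b) ∩ {w | ⟪z, w⟫ = 0} =
      PolarCone (Set.range (Sum.elim b ![z, -z])) := by
    ext w
    simp only [Set.mem_inter_iff, mem_polarCone_range, Sum.forall, Sum.elim_inl, Sum.elim_inr,
      Fin.forall_fin_two, Matrix.cons_val_zero, Matrix.cons_val_one, Set.mem_ofPred_eq,
      inner_neg_right, neg_nonpos, real_inner_comm z]
    constructor
    · rintro ⟨hb, hz⟩
      exact ⟨hb, hz.le, hz.ge⟩
    · rintro ⟨hb, hz, hz'⟩
      exact ⟨hb, le_antisymm hz hz'⟩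
  rw [hK, polarCone_polarCone_range]
  intro v hv
  obtain ⟨μ, hμ, rfl⟩ := mem_coneHull.1 hv
  refine ⟨∑ i, μ (Sum.inl i) • b i, mem_coneHull.2 ⟨_, fun i => hμ _, rfl⟩,
    μ (Sum.inr 0) - μ (Sum.inr 1), ?_⟩
  simp [Fintype.sum_sum_type, sub_smul]
  abel

end Polar

/-- If `u + t • z ∈ C` with `t ≥ 1`, then `hC` applied to `t⁻¹ • u + z` gives
`u + (t / 2) • z ∈ C`; iterating brings the coefficient of `z` down to `1`. -/
lemma PointedCone.eventually_add_mem {E : Type*} [NormedAddCommGroup E] [NormedSpace ℝ E]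
    {C : PointedCone ℝ E} {z : E} (hz : z ∈ C)
    (hC : ∀ᶠ v in 𝓝 z, v ∈ C → v - (2⁻¹ : ℝ) • z ∈ C) :
    ∀ᶠ u in 𝓝 0, ∀ q ∈ C, ∀ r : ℝ, u = q + r • z → u + z ∈ C := by
  obtain ⟨ε, hε, hball⟩ := Metric.eventually_nhds_iff.1 hC
  filter_upwards [Metric.ball_mem_nhds 0 hε] with u hu q hq r hqr
  have hmono : ∀ {s t : ℝ}, s ≤ t → u + s • z ∈ C → u + t • z ∈ C := fun hst h => by
    convert C.add_mem h (C.smul_mem (sub_nonneg.2 hst) hz) using 1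
    module
  have hhalf : ∀ t : ℝ, 1 ≤ t → u + t • z ∈ C → u + (t / 2) • z ∈ C := by
    intro t ht h
    have ht0 : 0 < t := by linarith
    have hnear : dist (t⁻¹ • (u + t • z)) z < ε := by
      rw [smul_add, smul_smul, inv_mul_cancel₀ ht0.ne', one_smul, dist_add_self_left,
        norm_smul, Real.norm_eq_abs, abs_inv, abs_of_pos ht0]
      rw [Metric.mem_ball, dist_zero_right] at hu
      calc t⁻¹ * ‖u‖ ≤ 1 * ‖u‖ := by gcongr; exact inv_le_one_of_one_le₀ ht
        _ < ε := by rwa [one_mul]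
    convert C.smul_mem ht0.le (hball hnear (C.smul_mem (inv_nonneg.2 ht0.le) h)) using 1
    rw [smul_sub, smul_smul, mul_inv_cancel₀ ht0.ne', one_smul, smul_smul]
    module
  have hiter : ∀ n : ℕ, ∀ t : ℝ, 1 ≤ t → t ≤ 2 ^ n → u + t • z ∈ C → u + z ∈ C := by
    intro n
    induction n with
    | zero =>
      intro t h1 h2 h
      rwa [pow_zero, le_antisymm h2 h1, one_smul] at *
    | succ n ih =>
      intro t h1 h2 h
      refine ih (max 1 (t / 2)) (le_max_left _ _) (max_le (one_le_pow₀ one_le_two) ?_)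
        (hmono (le_max_right _ _) (hhalf t h1 h))
      rw [pow_succ] at h2
      linarith
  obtain ⟨n, hn⟩ := pow_unbounded_of_one_lt (max 1 (-r)) one_lt_two
  refine hiter n _ (le_max_left _ _) hn.le ?_
  rw [hqr]
  convert C.add_mem hq (C.smul_mem (by linarith [le_max_right 1 (-r)] : 0 ≤ r + max 1 (-r)) hz)
    using 1
  module

section CriticalCone

variable {ι E : Type*} [Fintype ι] [NormedAddCommGroup E] [InnerProductSpace ℝ E]
  [FiniteDimensional ℝ E]

theorem eventually_polarCone_add_iff_criticalCone (b : ι → E) {z : E}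
    (hz : z ∈ PolarCone (PolarCone (Set.range b))) :
    ∀ᶠ v in 𝓝 (0 : E), ∀ w,
      (w ∈ PolarCone (Set.range b) ∧ v + z ∈ PolarCone (PolarCone (Set.range b)) ∧
        ⟪v + z, w⟫ = 0) ↔
      (w ∈ PolarCone (Set.range b) ∩ {w | ⟪z, w⟫ = 0} ∧
        v ∈ PolarCone (PolarCone (Set.range b) ∩ {w | ⟪z, w⟫ = 0}) ∧ ⟪w, v⟫ = 0) := by
  rw [polarCone_polarCone_range] at hz
  have hhalf : ∀ᶠ v in 𝓝 (0 : E), v + z ∈ coneHull b → v + (2⁻¹ : ℝ) • z ∈ coneHull b := by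
    have hcont : Tendsto (· + z) (𝓝 (0 : E)) (𝓝 z) := by
      simpa using (continuous_add_const z).tendsto (0 : E)
    filter_upwards [hcont.eventually (eventually_sub_half_smul_mem_coneHull b z)] with v hv h
    convert hv h using 1
    module
  filter_upwards [hhalf, (coneHull b).eventually_add_mem hz
    (eventually_sub_half_smul_mem_coneHull b z)] with v hhalf hadd w
  rw [polarCone_polarCone_range]
  have hpair : ∀ q ∈ coneHull b, ∀ u ∈ PolarCone (Set.range b), ⟪q, u⟫ ≤ 0 := by
    intro q hq
    rwa [← SetLike.mem_coe, ← polarCone_polarCone_range] at hq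
  constructor
  · rintro ⟨hw, hvz, hvzw⟩
    have h1 := hpair _ (hhalf hvz) w hw
    have h2 := hpair z hz w hw
    rw [inner_add_left, real_inner_smul_left] at h1
    rw [inner_add_left] at hvzw
    have hzw : ⟪z, w⟫ = 0 := by linarith
    refine ⟨⟨hw, hzw⟩, fun u hu => ?_, by rw [real_inner_comm]; linarith⟩
    have := hpair _ hvz u hu.1
    rw [inner_add_left, hu.2] at this
    linarith
  · rintro ⟨⟨hw, hzw⟩, hv, hwv⟩
    obtain ⟨q, hq, r, hqr⟩ := polarCone_inter_orthogonal_subset b z hv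
    exact ⟨hw, hadd q hq r hqr, by rw [inner_add_left, real_inner_comm, hwv, hzw, add_zero]⟩

end CriticalCone

section Polyhedron

variable {E : Type*} [NormedAddCommGroup E] [InnerProductSpace ℝ E]

lemma IsConvexPolyhedral.exists_eq_setOf_inner_le [CompleteSpace E] {D : Set E}
    (hD : IsConvexPolyhedral D) :
    ∃ (k : ℕ) (a : Fin k → E) (c : Fin k → ℝ), D = {x | ∀ i, ⟪a i, x⟫ ≤ c i} := by
  obtain ⟨k, f, c, rfl⟩ := hD
  exact ⟨k, fun i => (InnerProductSpace.toDual ℝ E).symm (f i), c, by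
    simp [InnerProductSpace.toDual_symm_apply]⟩

lemma convex_setOf_inner_le {ι : Type*} (a : ι → E) (c : ι → ℝ) :
    Convex ℝ {x | ∀ i, ⟪a i, x⟫ ≤ c i} := by
  simp only [Set.ofPred_forall]
  exact convex_iInter fun i => convex_halfSpace_le (innerₛₗ ℝ (a i)).isLinear (c i)

lemma eventually_add_mem_setOf_inner_le_iff {ι : Type*} [Finite ι] {a : ι → E} {c : ι → ℝ}
    {z : E} (hz : ∀ i, ⟪a i, z⟫ ≤ c i) :
    ∀ᶠ u in 𝓝 (0 : E), (∀ i, ⟪a i, u + z⟫ ≤ c i) ↔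
      u ∈ PolarCone (Set.range fun i : {i // ⟪a i, z⟫ = c i} => a i) := by
  have hinactive : ∀ᶠ u in 𝓝 (0 : E), ∀ i, ⟪a i, z⟫ < c i → ⟪a i, u + z⟫ < c i :=
    eventually_all.2 fun i => eventually_imp_distrib_left.2 fun hi =>
      (by fun_prop : Continuous fun u => ⟪a i, u + z⟫).continuousAt.eventually_lt
        continuousAt_const (by simpa using hi)
  filter_upwards [hinactive] with u hu
  simp only [mem_polarCone_range, Subtype.forall]
  constructor
  · intro h i hi
    linarith [h i, inner_add_right (𝕜 := ℝ) (a i) u z, real_inner_comm (a i) u]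
  · intro h i
    rcases (hz i).lt_or_eq with hlt | heq
    · exact (hu i hlt).le
    · linarith [h i heq, inner_add_right (𝕜 := ℝ) (a i) u z, real_inner_comm (a i) u]

lemma convNormal_subset_of_eventually_iff {C C' : Set E} {x : E} (hC' : Convex ℝ C')
    (h : ∀ᶠ y in 𝓝 x, y ∈ C ↔ y ∈ C') : ConvNormal C x ⊆ ConvNormal C' x := by
  rintro v ⟨hx, hv⟩
  have hx' := h.self_of_nhds.1 hx
  refine ⟨hx', fun y hy => ?_⟩
  have hseg : Tendsto (fun t : ℝ => x + t • (y - x)) (𝓝[>] 0) (𝓝 x) := by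
    have : Continuous fun t : ℝ => x + t • (y - x) := by fun_prop
    simpa using (this.tendsto 0).mono_left nhdsWithin_le_nhds
  obtain ⟨t, hiff, ht0, ht1⟩ := ((hseg.eventually h).and (Ioo_mem_nhdsGT one_pos)).exists
  have := hv _ (hiff.2 (hC'.add_smul_sub_mem hx' hy ⟨ht0.le, ht1.le⟩))
  rw [add_sub_cancel_left, real_inner_smul_right] at this
  exact nonpos_of_mul_nonpos_right this ht0

lemma convNormal_congr {C C' : Set E} {x : E} (hC : Convex ℝ C) (hC' : Convex ℝ C')
    (h : ∀ᶠ y in 𝓝 x, y ∈ C ↔ y ∈ C') : ConvNormal C x = ConvNormal C' x :=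
  (convNormal_subset_of_eventually_iff hC' h).antisymm
    (convNormal_subset_of_eventually_iff hC (h.mono fun _ hy => hy.symm))

lemma convNormal_preimage_add_const (C : Set E) (w z : E) :
    ConvNormal ((· + z) ⁻¹' C) w = ConvNormal C (w + z) := by
  ext v
  simp only [ConvNormal, Set.mem_preimage, Set.mem_ofPred_eq]
  refine and_congr_right fun _ => ⟨fun h y hy => ?_, fun h y hy => ?_⟩
  · simpa [sub_add_eq_sub_sub_swap] using h (y - z) (by simpa using hy)
  · simpa using h (y + z) hy

lemma eventually_convNormal_add_eq {P T : Set E} {z : E} (hP : Convex ℝ P) (hT : Convex ℝ T)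
    (h : ∀ᶠ u in 𝓝 0, u + z ∈ P ↔ u ∈ T) :
    ∀ᶠ w in 𝓝 0, ConvNormal P (w + z) = ConvNormal T w := by
  filter_upwards [h.eventually_nhds] with w hw
  rw [← convNormal_preimage_add_const]
  exact convNormal_congr (hP.translate_preimage_left z) hT hw

lemma seqTangent_eq_polarCone {P s : Set E} {z : E}
    (h : ∀ᶠ u in 𝓝 0, u + z ∈ P ↔ u ∈ PolarCone s) :
    SeqTangent P z = PolarCone s := by
  refine subset_antisymm ?_ fun u hu => ?_
  · rintro u ⟨t, w, ht, ht0, hw, hmem⟩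
    have htw : Tendsto (fun k => t k • w k) atTop (𝓝 0) := by
      simpa using ht0.smul hw
    refine (isClosed_polarCone s).mem_of_tendsto hw ?_
    filter_upwards [htw.eventually h] with k hk
    have := smul_mem_polarCone (inv_nonneg.2 (ht k).le) (hk.1 (by rw [add_comm]; exact hmem k))
    rwa [smul_smul, inv_mul_cancel₀ (ht k).ne', one_smul] at this
  · have hlim : Tendsto (fun k : ℕ => (1 / ((k : ℝ) + 1)) • u) atTop (𝓝 0) := by
      simpa using (tendsto_one_div_add_atTop_nhds_zero_nat (𝕜 := ℝ)).smul_const u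
    obtain ⟨N, hN⟩ := eventually_atTop.1 (hlim.eventually h)
    refine ⟨fun k => 1 / (((k + N : ℕ) : ℝ) + 1), fun _ => u, fun k => by positivity,
      (tendsto_add_atTop_iff_nat N).2 tendsto_one_div_add_atTop_nhds_zero_nat,
      tendsto_const_nhds, fun k => ?_⟩
    rw [add_comm]
    exact (hN _ (Nat.le_add_left _ _)).2 (smul_mem_polarCone (by positivity) hu)

end Polyhedron

lemma exists_mem_inter_eq_inter_of_eventually_iff {X : Type*} {l : Filter X} {A B : Set X}
    (h : ∀ᶠ x in l, x ∈ A ↔ x ∈ B) : ∃ O ∈ l, A ∩ O = B ∩ O :=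
  ⟨_, h, by ext x; simp only [Set.mem_inter_iff, Set.mem_ofPred_eq]; tauto⟩

/-- Reduction lemma: near the origin, the translated graph of the normal cone map of a
convex polyhedral set `D` coincides with
`{(w, w*) : w ∈ K, w* ∈ K°, ⟨w, w*⟩ = 0}` for the critical cone
`K = T_D(z̄) ∩ [z̄*]^⊥`. -/
theorem stmt_8 {s : ℕ} (D : Set (EuclideanSpace ℝ (Fin s)))
    (hD : IsConvexPolyhedral D)
    (zb zs : EuclideanSpace ℝ (Fin s)) (h : zs ∈ ConvNormal D zb) :
    ∃ O ∈ 𝓝 ((0, 0) : EuclideanSpace ℝ (Fin s) × EuclideanSpace ℝ (Fin s)),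
      {p : EuclideanSpace ℝ (Fin s) × EuclideanSpace ℝ (Fin s) |
          p.2 + zs ∈ ConvNormal D (p.1 + zb)} ∩ O =
      {p : EuclideanSpace ℝ (Fin s) × EuclideanSpace ℝ (Fin s) |
          p.1 ∈ SeqTangent D zb ∩ {w | (inner ℝ zs w : ℝ) = 0} ∧
          p.2 ∈ PolarCone (SeqTangent D zb ∩ {w | (inner ℝ zs w : ℝ) = 0}) ∧
          (inner ℝ p.1 p.2 : ℝ) = 0} ∩ O := by
  classical
  obtain ⟨k, a, c, rfl⟩ := hD.exists_eq_setOf_inner_le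
  have hloc := eventually_add_mem_setOf_inner_le_iff h.1
  have hN := eventually_convNormal_add_eq (convex_setOf_inner_le a c) (convex_polarCone _) hloc
  have hzs := h
  rw [← zero_add zb, hN.self_of_nhds, mem_convNormal_polarCone_iff] at hzs
  rw [seqTangent_eq_polarCone hloc]
  refine exists_mem_inter_eq_inter_of_eventually_iff ?_
  filter_upwards [hN.prod_nhds (eventually_polarCone_add_iff_criticalCone _ hzs.2.1)] with p hp
  rw [hp.1, mem_convNormal_polarCone_iff]
  exact hp.2 p.1
end

section
/- Let C ⊆ ℝ^n be closed, φ : ℝ^n → ℝ^l continuous, Q = φ(C), ȳ ∈ Q, and x̄ ∈ φ^{-1}(ȳ) ∩ C. If φ is calm at x̄ in a direction u ∈ T_C(x̄) (i.e., ‖φ(x̄ + t_k u_k) − φ(x̄)‖ ≤ κ t_k‖u_k‖ for sequences t_k ↓ 0, u_k → u), then there exists v ∈ T_Q(ȳ) with v ∈ Dφ(x̄)(u), i.e., (u, v) ∈ T_{gph φ}(x̄, ȳ). In particular, if φ is calm at x̄, then T_C(x̄) ⊆ {u : ∃ v ∈ T_Q(ȳ) with (u, v) ∈ T_{gph φ}(x̄,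 φ(x̄))}. -/
/-!
Along a sequence `x̄ + t_k w_k ∈ C` realising `u ∈ T_C(x̄)`, calmness bounds the difference
quotients `v_k = t_k⁻¹ (φ(x̄ + t_k w_k) - φ(x̄))` by `κ ‖w_k‖`. In a proper (e.g. finite-dimensional)
target they have a convergent subsequence, and its limit `v` is the required direction: the identity
`φ(x̄) + t_k v_k = φ(x̄ + t_k w_k)` places `φ(x̄) + t_k v_k` in `φ(C)` and
`(x̄, φ(x̄)) + t_k (w_k, v_k)` on the graph of `φ`.
-/

open Filter Topology

open Metric

section Calm

variable {E F : Type*} [NormedAddCommGroup E] [NormedSpace ℝ E] [NormedAddCommGroup F]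

theorem norm_inv_smul_sub_le_of_calm [NormedSpace ℝ F] {φ : E → F} {x w : E} {t κ : ℝ}
    (ht : 0 < t)
    (hcalm : ‖φ (x + t • w) - φ x‖ ≤ κ * ‖t • w‖) :
    ‖t⁻¹ • (φ (x + t • w) - φ x)‖ ≤ κ * ‖w‖ :=
  calc ‖t⁻¹ • (φ (x + t • w) - φ x)‖ = t⁻¹ * ‖φ (x + t • w) - φ x‖ :=
        norm_smul_of_nonneg (inv_pos.mpr ht).le _
    _ ≤ t⁻¹ * (κ * (t * ‖w‖)) := by
        rw [← norm_smul_of_nonneg ht.le]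
        exact mul_le_mul_of_nonneg_left hcalm (inv_pos.mpr ht).le
    _ = κ * ‖w‖ := by field_simp

theorem eventually_calm_along_of_calm {φ : E → F} {x u : E} {κ : ℝ}
    (hcalm : ∀ᶠ y in 𝓝 x, ‖φ y - φ x‖ ≤ κ * ‖y - x‖) {t : ℕ → ℝ} {w : ℕ → E}
    (ht : Tendsto t atTop (𝓝 0)) (hw : Tendsto w atTop (𝓝 u)) :
    ∀ᶠ k in atTop, ‖φ (x + t k • w k) - φ x‖ ≤ κ * ‖t k • w k‖ := by
  have hx : Tendsto (fun k => x + t k • w k) atTop (𝓝 x) := by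
    simpa using tendsto_const_nhds.add (ht.smul hw)
  filter_upwards [hx.eventually hcalm] with k hk
  simpa using hk

theorem exists_mem_seqTangent_image_and_graph_of_calm [NormedSpace ℝ F] [ProperSpace F]
    {C : Set E} {φ : E → F} {x u : E} (hu : u ∈ SeqTangent C x)
    (hcalm : ∃ κ : ℝ, 0 < κ ∧ ∀ (t : ℕ → ℝ) (w : ℕ → E),
      (∀ k, 0 < t k) → Tendsto t atTop (𝓝 0) → Tendsto w atTop (𝓝 u) →
      ∀ᶠ k in atTop, ‖φ (x + t k • w k) - φ x‖ ≤ κ * ‖t k • w k‖) :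
    ∃ v, v ∈ SeqTangent (φ '' C) (φ x) ∧
      (u, v) ∈ SeqTangent {p : E × F | p.2 = φ p.1} (x, φ x) := by
  obtain ⟨t, w, ht_pos, ht, hw, hmem⟩ := hu
  obtain ⟨κ, hκ_pos, hκ⟩ := hcalm
  obtain ⟨M, hM⟩ := hw.norm.bddAbove_range
  set q : ℕ → F := fun k => (t k)⁻¹ • (φ (x + t k • w k) - φ x)
  have hq_bdd : ∀ᶠ k in atTop, q k ∈ closedBall 0 (κ * M) := by
    filter_upwards [hκ t w ht_pos ht hw] with k hk
    rw [mem_closedBall_zero_iff]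
    exact (norm_inv_smul_sub_le_of_calm (ht_pos k) hk).trans
      (mul_le_mul_of_nonneg_left (hM ⟨k, rfl⟩) hκ_pos.le)
  obtain ⟨v, -, g, hg, hqv⟩ := tendsto_subseq_of_frequently_bounded isBounded_closedBall
    hq_bdd.frequently
  have hstep : ∀ k, φ x + t k • q k = φ (x + t k • w k) := fun k => by
    simp only [q, smul_inv_smul₀ (ht_pos k).ne', add_sub_cancel]
  have htg : Tendsto (t ∘ g) atTop (𝓝 0) := ht.comp hg.tendsto_atTop
  refine ⟨v, ⟨t ∘ g, q ∘ g, fun k => ht_pos _, htg, hqv, fun k => ?_⟩,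
    ⟨t ∘ g, fun k => (w (g k), q (g k)), fun k => ht_pos _, htg,
      (hw.comp hg.tendsto_atTop).prodMk_nhds hqv, fun k => hstep (g k)⟩⟩
  exact hstep (g k) ▸ Set.mem_image_of_mem φ (hmem (g k))

end Calm

theorem stmt_9_general {n l : ℕ}
    (C : Set (EuclideanSpace ℝ (Fin n)))
    (φ : EuclideanSpace ℝ (Fin n) → EuclideanSpace ℝ (Fin l))
    (yb : EuclideanSpace ℝ (Fin l)) (xb : EuclideanSpace ℝ (Fin n))
    (hφxb : φ xb = yb) :
    (∀ u ∈ SeqTangent C xb,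
      (∃ κ : ℝ, 0 < κ ∧ ∀ (t : ℕ → ℝ) (w : ℕ → EuclideanSpace ℝ (Fin n)),
        (∀ k, 0 < t k) → Tendsto t atTop (𝓝 0) → Tendsto w atTop (𝓝 u) →
        ∀ᶠ k in atTop, ‖φ (xb + t k • w k) - φ xb‖ ≤ κ * ‖t k • w k‖) →
      ∃ v, v ∈ SeqTangent (φ '' C) yb ∧
        ((u, v) : _ × _) ∈
          SeqTangent {p : EuclideanSpace ℝ (Fin n) × EuclideanSpace ℝ (Fin l) |
            p.2 = φ p.1} (xb, yb)) ∧
    ((∃ κ : ℝ, 0 < κ ∧ ∀ᶠ y in 𝓝 xb, ‖φ y - φ xb‖ ≤ κ * ‖y - xb‖) →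
      ∀ u ∈ SeqTangent C xb,
        ∃ v, v ∈ SeqTangent (φ '' C) yb ∧
          ((u, v) : _ × _) ∈
            SeqTangent {p : EuclideanSpace ℝ (Fin n) × EuclideanSpace ℝ (Fin l) |
              p.2 = φ p.1} (xb, yb)) := by
  subst hφxb
  refine ⟨fun u hu hcalm => exists_mem_seqTangent_image_and_graph_of_calm hu hcalm, ?_⟩
  rintro ⟨κ, hκ, hcalm⟩ u hu
  exact exists_mem_seqTangent_image_and_graph_of_calm hu
    ⟨κ, hκ, fun t w _ ht hw => eventually_calm_along_of_calm hcalm ht hw⟩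

/-- If `φ` is calm at `xb` in a direction `u ∈ T_C(xb)`, then there is `v ∈ T_Q(yb)`
with `(u, v)` tangent to the graph of `φ`; in particular, if `φ` is calm at `xb`, then
`T_C(xb) ⊆ {u : ∃ v ∈ T_Q(yb), (u, v) ∈ T_{gph φ}(xb, yb)}`. -/
theorem stmt_9 {n l : ℕ}
    (C : Set (EuclideanSpace ℝ (Fin n))) (hC : IsClosed C)
    (φ : EuclideanSpace ℝ (Fin n) → EuclideanSpace ℝ (Fin l)) (hφ : Continuous φ)
    (yb : EuclideanSpace ℝ (Fin l)) (xb : EuclideanSpace ℝ (Fin n))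
    (hxb : xb ∈ C) (hφxb : φ xb = yb) :
    (∀ u ∈ SeqTangent C xb,
      (∃ κ : ℝ, 0 < κ ∧ ∀ (t : ℕ → ℝ) (w : ℕ → EuclideanSpace ℝ (Fin n)),
        (∀ k, 0 < t k) → Tendsto t atTop (𝓝 0) → Tendsto w atTop (𝓝 u) →
        ∀ᶠ k in atTop, ‖φ (xb + t k • w k) - φ xb‖ ≤ κ * ‖t k • w k‖) →
      ∃ v, v ∈ SeqTangent (φ '' C) yb ∧
        ((u, v) : _ × _) ∈
          SeqTangent {p : EuclideanSpace ℝ (Fin n) × EuclideanSpace ℝ (Fin l) |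
            p.2 = φ p.1} (xb, yb)) ∧
    ((∃ κ : ℝ, 0 < κ ∧ ∀ᶠ y in 𝓝 xb, ‖φ y - φ xb‖ ≤ κ * ‖y - xb‖) →
      ∀ u ∈ SeqTangent C xb,
        ∃ v, v ∈ SeqTangent (φ '' C) yb ∧
          ((u, v) : _ × _) ∈
            SeqTangent {p : EuclideanSpace ℝ (Fin n) × EuclideanSpace ℝ (Fin l) |
              p.2 = φ p.1} (xb, yb)) :=
  stmt_9_general C φ yb xb hφxb
end

section
/- Let C ⊆ ℝ^n be closed, φ : ℝ^n → ℝ^l continuous, Q = φ(C), ȳ ∈ Q, and let Ψ(y) := φ^{-1}(y) ∩ C. If Ψ is inner calm* at ȳ with respect to dom Ψ = Q in the fuzzy sense, then T_Q(ȳ) ⊆ ⋃_{x̄ ∈ Ψ(ȳ)} {v : ∃ u ∈ T_C(x̄) with (u, v) ∈ T_{gph φ}(x̄, ȳ)}. -/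
/-!
For a unit tangent direction `v` of `Q = φ(C)` write `y_k = ȳ + t_k w_k ∈ Q` with `t_k ↓ 0`,
`w_k → v`. Inner calmness gives `x_k ∈ Ψ(y_k)` with `‖x_k - x̄‖ ≤ κ t_k ‖w_k‖`, so `x_k → x̄`
(whence `x̄ ∈ Ψ(ȳ)` by closedness and continuity) and the difference quotients
`(x_k - x̄)/t_k` are bounded. A convergent subsequence has a limit `u` tangent to `C`, and
`(u, v)` is the limit of the difference quotients of `(x_k, y_k) ∈ gph φ`. Arbitrary
directions follow by scaling, since tangent cones are cones.
-/

open Filter Topology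

/-- The sequence `y` converges to `yb` from direction `v`. -/
def ConvFromDir {E : Type*} [NormedAddCommGroup E] [NormedSpace ℝ E]
    (yb v : E) (y : ℕ → E) : Prop :=
  ∃ t : ℕ → ℝ, ∃ w : ℕ → E, (∀ k, 0 < t k) ∧ Tendsto t atTop (𝓝 0) ∧
    Tendsto w atTop (𝓝 v) ∧ ∀ k, y k = yb + t k • w k

/-- `S` is inner calm* at `yb` wrt `Ω` in direction `v` in the fuzzy sense. -/
def FuzzyInnerCalmStarDirAt {E F : Type*} [NormedAddCommGroup E] [NormedSpace ℝ E]
    [NormedAddCommGroup F]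
    (S : E → Set F) (Ω : Set E) (yb : E) (v : E) : Prop :=
  v ∉ SeqTangent Ω yb ∨
    ∃ κ : ℝ, 0 < κ ∧ ∃ y : ℕ → E, (∀ k, y k ∈ Ω) ∧ ConvFromDir yb v y ∧
      ∃ x : ℕ → F, ∃ xb : F, (∀ k, x k ∈ S (y k)) ∧
        ∀ k, ‖x k - xb‖ ≤ κ * ‖y k - yb‖

/-- `S` is inner calm* at `yb` wrt `Ω` in the fuzzy sense: fuzzy inner calmness*
in every unit direction. -/
def FuzzyInnerCalmStarAt {E F : Type*} [NormedAddCommGroup E] [NormedSpace ℝ E]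
    [NormedAddCommGroup F]
    (S : E → Set F) (Ω : Set E) (yb : E) : Prop :=
  ∀ v : E, ‖v‖ = 1 → FuzzyInnerCalmStarDirAt S Ω yb v

namespace SeqTangent

variable {E : Type*} [NormedAddCommGroup E] [NormedSpace ℝ E]

lemma smul_mem {Ω : Set E} {x u : E} {c : ℝ} (hc : 0 < c) (hu : u ∈ SeqTangent Ω x) :
    c • u ∈ SeqTangent Ω x := by
  obtain ⟨t, w, ht, ht0, hw, hmem⟩ := hu
  refine ⟨fun k => t k / c, fun k => c • w k, fun k => div_pos (ht k) hc, ?_, hw.const_smul c,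
    fun k => ?_⟩
  · simpa using ht0.div_const c
  · simpa [smul_smul, div_mul_cancel₀ _ hc.ne'] using hmem k

lemma zero_mem {Ω : Set E} {x : E} (hx : x ∈ Ω) : (0 : E) ∈ SeqTangent Ω x :=
  ⟨fun k => 1 / (k + 1), fun _ => 0, fun k => by positivity,
    tendsto_one_div_add_atTop_nhds_zero_nat, tendsto_const_nhds, fun k => by simpa⟩

lemma mem_of_tendsto_smul_sub {Ω : Set E} {x₀ u : E} {t : ℕ → ℝ} {x : ℕ → E}
    (ht : ∀ k, 0 < t k) (ht0 : Tendsto t atTop (𝓝 0)) (hx : ∀ k, x k ∈ Ω)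
    (hu : Tendsto (fun k => (t k)⁻¹ • (x k - x₀)) atTop (𝓝 u)) : u ∈ SeqTangent Ω x₀ :=
  ⟨t, _, ht, ht0, hu, fun k => by simpa [smul_smul, mul_inv_cancel₀ (ht k).ne'] using hx k⟩

end SeqTangent

section ImageTangent

variable {E F : Type*} [NormedAddCommGroup E] [NormedSpace ℝ E] [ProperSpace E]
  [NormedAddCommGroup F] [NormedSpace ℝ F]
  {C : Set E} {φ : E → F} {yb v : F}

theorem mem_preimage_inter_and_exists_seqTangent_graph_of_calm (hC : IsClosed C)
    (hφ : Continuous φ) {t : ℕ → ℝ} {w : ℕ → F} {x : ℕ → E} {xb : E} {κ : ℝ}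
    (ht : ∀ k, 0 < t k) (ht0 : Tendsto t atTop (𝓝 0)) (hw : Tendsto w atTop (𝓝 v))
    (hxC : ∀ k, x k ∈ C) (hφx : ∀ k, φ (x k) = yb + t k • w k) (hκ : 0 ≤ κ)
    (hx : ∀ k, ‖x k - xb‖ ≤ κ * ‖t k • w k‖) :
    xb ∈ φ ⁻¹' {yb} ∩ C ∧ ∃ u ∈ SeqTangent C xb,
      (u, v) ∈ SeqTangent {p : E × F | p.2 = φ p.1} (xb, yb) := by
  have htw : Tendsto (fun k => t k • w k) atTop (𝓝 0) := by
    simpa using ht0.smul hw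
  have hx_lim : Tendsto x atTop (𝓝 xb) := by
    rw [tendsto_iff_norm_sub_tendsto_zero]
    refine squeeze_zero (fun k => norm_nonneg _) hx ?_
    simpa using (htw.norm.const_mul κ)
  have hφxb : φ xb = yb := by
    refine tendsto_nhds_unique ((hφ.tendsto xb).comp hx_lim) ?_
    simpa [Function.comp_def, hφx] using tendsto_const_nhds.add htw
  obtain ⟨M, hM⟩ : ∃ M, ∀ k, ‖w k‖ ≤ M := by
    obtain ⟨M, hM⟩ := hw.norm.bddAbove_range
    exact ⟨M, fun k => hM ⟨k, rfl⟩⟩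
  have hquot : ∀ k, (t k)⁻¹ • (x k - xb) ∈ Metric.closedBall (0 : E) (κ * M) := by
    intro k
    have htk := ht k
    rw [mem_closedBall_zero_iff, norm_smul, norm_inv, Real.norm_of_nonneg htk.le,
      inv_mul_le_iff₀ htk]
    calc ‖x k - xb‖ ≤ κ * ‖t k • w k‖ := hx k
      _ = t k * (κ * ‖w k‖) := by rw [norm_smul, Real.norm_of_nonneg htk.le]; ring
      _ ≤ t k * (κ * M) := by gcongr; exact hM k
  obtain ⟨u, -, ψ, hψ, hu⟩ := tendsto_subseq_of_bounded Metric.isBounded_closedBall hquot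
  have htψ : Tendsto (t ∘ ψ) atTop (𝓝 0) := ht0.comp hψ.tendsto_atTop
  refine ⟨⟨hφxb, hC.mem_of_tendsto hx_lim (.of_forall hxC)⟩, u,
    SeqTangent.mem_of_tendsto_smul_sub (fun k => ht _) htψ (fun k => hxC (ψ k)) hu, ?_⟩
  refine SeqTangent.mem_of_tendsto_smul_sub (x := fun k => (x (ψ k), φ (x (ψ k))))
    (fun k => ht _) htψ (fun k => rfl) ?_
  refine (hu.prodMk_nhds (hw.comp hψ.tendsto_atTop)).congr fun k => ?_
  simp [hφx, smul_smul, inv_mul_cancel₀ (ht (ψ k)).ne']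

theorem exists_seqTangent_graph_of_fuzzyInnerCalmStarDirAt (hC : IsClosed C)
    (hφ : Continuous φ) (hv : v ∈ SeqTangent (φ '' C) yb)
    (hcalm : FuzzyInnerCalmStarDirAt (fun y => φ ⁻¹' {y} ∩ C) (φ '' C) yb v) :
    ∃ xb ∈ φ ⁻¹' {yb} ∩ C, ∃ u ∈ SeqTangent C xb,
      (u, v) ∈ SeqTangent {p : E × F | p.2 = φ p.1} (xb, yb) := by
  rcases hcalm with hv' | ⟨κ, hκ, y, -, ⟨t, w, ht, ht0, hw, hy⟩, x, xb, hxΨ, hx⟩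
  · exact absurd hv hv'
  obtain ⟨hxb, hu⟩ := mem_preimage_inter_and_exists_seqTangent_graph_of_calm hC hφ ht ht0 hw
    (fun k => (hxΨ k).2) (fun k => (hxΨ k).1.trans (hy k)) hκ.le
    (fun k => by simpa [hy k] using hx k)
  exact ⟨xb, hxb, hu⟩

end ImageTangent

/-- Tangents to image sets: if `Ψ(y) = φ⁻¹(y) ∩ C` is inner calm* at `yb` wrt
`dom Ψ = Q = φ(C)` in the fuzzy sense, then every tangent `v ∈ T_Q(yb)` arises from
some `x̄ ∈ Ψ(yb)` and a tangent `u ∈ T_C(x̄)` with `(u, v)` tangent to `gph φ`. -/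
theorem stmt_10 {n l : ℕ}
    (C : Set (EuclideanSpace ℝ (Fin n))) (hC : IsClosed C)
    (φ : EuclideanSpace ℝ (Fin n) → EuclideanSpace ℝ (Fin l)) (hφ : Continuous φ)
    (yb : EuclideanSpace ℝ (Fin l)) (hyb : yb ∈ φ '' C)
    (hic : FuzzyInnerCalmStarAt (fun y => φ ⁻¹' {y} ∩ C) (φ '' C) yb) :
    ∀ v ∈ SeqTangent (φ '' C) yb,
      ∃ xb ∈ φ ⁻¹' {yb} ∩ C, ∃ u ∈ SeqTangent C xb,
        ((u, v) : _ × _) ∈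
          SeqTangent {p : EuclideanSpace ℝ (Fin n) × EuclideanSpace ℝ (Fin l) |
            p.2 = φ p.1} (xb, yb) := by
  intro v hv
  obtain rfl | hv0 := eq_or_ne v 0
  · obtain ⟨xb, hxbC, rfl⟩ := hyb
    refine ⟨xb, ⟨rfl, hxbC⟩, 0, SeqTangent.zero_mem hxbC, ?_⟩
    exact SeqTangent.zero_mem (Ω := {p : _ × _ | p.2 = φ p.1}) (x := (xb, φ xb)) rfl
  have hpos : 0 < ‖v‖ := norm_pos_iff.2 hv0
  obtain ⟨xb, hxb, u, hu, huv⟩ := exists_seqTangent_graph_of_fuzzyInnerCalmStarDirAt hC hφ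
    (SeqTangent.smul_mem (inv_pos.2 hpos) hv) (hic _ (norm_smul_inv_norm hv0))
  refine ⟨xb, hxb, ‖v‖ • u, SeqTangent.smul_mem hpos hu, ?_⟩
  simpa [smul_inv_smul₀ hpos.ne'] using SeqTangent.smul_mem hpos huv
end

section
/- Let S₁ : ℝ^n ⇉ ℝ^m and S₂ : ℝ^m ⇉ ℝ^s be outer semicontinuous set-valued maps, S = S₂ ∘ S₁, (x̄, z̄) ∈ gph S, and let Ξ(x,z) = S₁(x) ∩ S₂^{-1}(z). If for ȳ ∈ Ξ(x̄, z̄) and vectors (u, v, w), v ∈ DΞ((x̄, z̄), ȳ)(u, w) holds (i.e., (u, w, v) ∈ T_{gph Ξ}(x̄, z̄, ȳ)), then w ∈ DS(x̄, z̄)(u) and w ∈ (DS₂(ȳ, z̄) ∘ DS₁(x̄, ȳ))(u), i.e., there exists v′ with (u, v′) ∈ T_{gph S₁}(x̄, ȳ) and (v′, w) ∈ T_{gph S₂}(ȳ, z̄). -/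
/-!
The graph of `Ξ` is mapped into the graphs of `S`, `S₁` and `S₂` by the coordinate projections
`(x, z, y) ↦ (x, z), (x, y), (y, z)`, and a continuous linear map carries contingent vectors of a
set to contingent vectors of any set containing its image.
-/

open Filter Topology

theorem SeqTangent.map_of_mapsTo {E F : Type*} [NormedAddCommGroup E] [NormedSpace ℝ E]
    [NormedAddCommGroup F] [NormedSpace ℝ F] (L : E →L[ℝ] F) {Ω : Set E} {Ω' : Set F}
    (hΩ : Set.MapsTo L Ω Ω') {x u : E} (hu : u ∈ SeqTangent Ω x) :
    L u ∈ SeqTangent Ω' (L x) := by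
  obtain ⟨t, w, ht, ht0, hw, hmem⟩ := hu
  refine ⟨t, L ∘ w, ht, ht0, (L.continuous.tendsto u).comp hw, fun k => ?_⟩
  simpa using hΩ (hmem k)

theorem stmt_13_general {n m s : ℕ}
    (S1 : EuclideanSpace ℝ (Fin n) → Set (EuclideanSpace ℝ (Fin m)))
    (S2 : EuclideanSpace ℝ (Fin m) → Set (EuclideanSpace ℝ (Fin s)))
    (xb : EuclideanSpace ℝ (Fin n)) (zb : EuclideanSpace ℝ (Fin s))
    (yb : EuclideanSpace ℝ (Fin m))
    (u : EuclideanSpace ℝ (Fin n)) (w : EuclideanSpace ℝ (Fin s))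
    (v : EuclideanSpace ℝ (Fin m))
    (hv : ((u, w, v) : EuclideanSpace ℝ (Fin n) ×
        (EuclideanSpace ℝ (Fin s) × EuclideanSpace ℝ (Fin m))) ∈
      SeqTangent {p : EuclideanSpace ℝ (Fin n) ×
          (EuclideanSpace ℝ (Fin s) × EuclideanSpace ℝ (Fin m)) |
        p.2.2 ∈ S1 p.1 ∧ p.2.1 ∈ S2 p.2.2} (xb, zb, yb)) :
    ((u, w) : _ × _) ∈
      SeqTangent {p : EuclideanSpace ℝ (Fin n) × EuclideanSpace ℝ (Fin s) |
        ∃ y ∈ S1 p.1, p.2 ∈ S2 y} (xb, zb) ∧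
    ∃ v' : EuclideanSpace ℝ (Fin m),
      ((u, v') : _ × _) ∈
        SeqTangent {p : EuclideanSpace ℝ (Fin n) × EuclideanSpace ℝ (Fin m) |
          p.2 ∈ S1 p.1} (xb, yb) ∧
      ((v', w) : _ × _) ∈
        SeqTangent {p : EuclideanSpace ℝ (Fin m) × EuclideanSpace ℝ (Fin s) |
          p.2 ∈ S2 p.1} (yb, zb) := by
  let x := ContinuousLinearMap.fst ℝ (EuclideanSpace ℝ (Fin n))
    (EuclideanSpace ℝ (Fin s) × EuclideanSpace ℝ (Fin m))
  let z := (ContinuousLinearMap.fst ℝ (EuclideanSpace ℝ (Fin s)) (EuclideanSpace ℝ (Fin m))).comp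
    (ContinuousLinearMap.snd ℝ (EuclideanSpace ℝ (Fin n)) _)
  let y := (ContinuousLinearMap.snd ℝ (EuclideanSpace ℝ (Fin s)) (EuclideanSpace ℝ (Fin m))).comp
    (ContinuousLinearMap.snd ℝ (EuclideanSpace ℝ (Fin n)) _)
  refine ⟨?_, v, ?_, ?_⟩
  · refine SeqTangent.map_of_mapsTo (x.prod z) ?_ hv
    exact fun p hp => ⟨p.2.2, hp⟩
  · exact SeqTangent.map_of_mapsTo (x.prod y) (fun _ hp => hp.1) hv
  · exact SeqTangent.map_of_mapsTo (y.prod z) (fun _ hp => hp.2) hv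

/-- If `v ∈ DΞ((xb, zb), yb)(u, w)` for the intermediate map
`Ξ(x, z) = S₁(x) ∩ S₂⁻¹(z)` of the composition `S = S₂ ∘ S₁`, then
`w ∈ DS(xb, zb)(u)` and `w ∈ (DS₂(yb, zb) ∘ DS₁(xb, yb))(u)`. -/
theorem stmt_13 {n m s : ℕ}
    (S1 : EuclideanSpace ℝ (Fin n) → Set (EuclideanSpace ℝ (Fin m)))
    (S2 : EuclideanSpace ℝ (Fin m) → Set (EuclideanSpace ℝ (Fin s)))
    (h1 : IsClosed {p : EuclideanSpace ℝ (Fin n) × EuclideanSpace ℝ (Fin m) | p.2 ∈ S1 p.1})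
    (h2 : IsClosed {p : EuclideanSpace ℝ (Fin m) × EuclideanSpace ℝ (Fin s) | p.2 ∈ S2 p.1})
    (xb : EuclideanSpace ℝ (Fin n)) (zb : EuclideanSpace ℝ (Fin s))
    (yb : EuclideanSpace ℝ (Fin m)) (hy : yb ∈ S1 xb) (hz : zb ∈ S2 yb)
    (u : EuclideanSpace ℝ (Fin n)) (w : EuclideanSpace ℝ (Fin s))
    (v : EuclideanSpace ℝ (Fin m))
    (hv : ((u, w, v) : EuclideanSpace ℝ (Fin n) ×
        (EuclideanSpace ℝ (Fin s) × EuclideanSpace ℝ (Fin m))) ∈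
      SeqTangent {p : EuclideanSpace ℝ (Fin n) ×
          (EuclideanSpace ℝ (Fin s) × EuclideanSpace ℝ (Fin m)) |
        p.2.2 ∈ S1 p.1 ∧ p.2.1 ∈ S2 p.2.2} (xb, zb, yb)) :
    ((u, w) : _ × _) ∈
      SeqTangent {p : EuclideanSpace ℝ (Fin n) × EuclideanSpace ℝ (Fin s) |
        ∃ y ∈ S1 p.1, p.2 ∈ S2 y} (xb, zb) ∧
    ∃ v' : EuclideanSpace ℝ (Fin m),
      ((u, v') : _ × _) ∈
        SeqTangent {p : EuclideanSpace ℝ (Fin n) × EuclideanSpace ℝ (Fin m) |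
          p.2 ∈ S1 p.1} (xb, yb) ∧
      ((v', w) : _ × _) ∈
        SeqTangent {p : EuclideanSpace ℝ (Fin m) × EuclideanSpace ℝ (Fin s) |
          p.2 ∈ S2 p.1} (yb, zb) :=
  stmt_13_general S1 S2 xb zb yb u w v hv
end

section
/- Chain rule upper estimate: let S₁ : ℝ^n ⇉ ℝ^m, S₂ : ℝ^m ⇉ ℝ^s be osc, S = S₂ ∘ S₁, (x̄, z̄) ∈ gph S, Ξ(x,z) = S₁(x) ∩ S₂^{-1}(z). If Ξ is inner calm* at (x̄, z̄) wrt dom Ξ in the fuzzy sense, then DS(x̄, z̄)(u) ⊆ ⋃_{ȳ ∈ Ξ(x̄, z̄)} (DS₂(ȳ, z̄) ∘ DS₁(x̄, ȳ))(u) for every u, i.e., for every w ∈ DS(x̄, z̄)(u) there exist ȳ ∈ S₁(x̄) with z̄ ∈ S₂(ȳ) and v with (u, v) ∈ T_{gph S₁}(x̄, ȳ) and (v, w) ∈ T_{gph S₂}(ȳ, z̄). -/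
/-!
A tangent direction `(u, w)` of `gph S` is rescaled to a unit vector, so that calmness of `Ξ`
yields points `(xb, zb) + t k • d k` of `gph S` with selections `y k ∈ Ξ` satisfying
`‖y k - yb‖ ≤ κ C t k`. The difference quotients `(y k - yb) / t k` are then bounded and a
cluster point `v` is the middle direction: along a subsequence the same points witness
`(u, v) ∈ T_{gph S₁}(xb, yb)` and `(v, w) ∈ T_{gph S₂}(yb, zb)`, and closedness of the graphs
gives `yb ∈ S₁ xb` and `zb ∈ S₂ yb`.
-/

open Filter Topology

section Tangent

variable {E : Type*} [NormedAddCommGroup E] [NormedSpace ℝ E] {Ω : Set E} {x : E}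

lemma zero_mem_seqTangent (hx : x ∈ Ω) : (0 : E) ∈ SeqTangent Ω x :=
  ⟨fun k => ((k : ℝ) + 1)⁻¹, fun _ => 0, fun k => by positivity,
    tendsto_one_div_add_atTop_nhds_zero_nat.congr (by simp [one_div]),
    tendsto_const_nhds, fun k => by simpa using hx⟩

lemma seqTangent_smul {p : E} (hp : p ∈ SeqTangent Ω x) {c : ℝ} (hc : 0 < c) :
    c • p ∈ SeqTangent Ω x := by
  obtain ⟨t, w, ht, ht0, hw, hmem⟩ := hp
  refine ⟨fun k => c⁻¹ * t k, fun k => c • w k, fun k => mul_pos (inv_pos.2 hc) (ht k),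
    by simpa using ht0.const_mul c⁻¹, hw.const_smul c, fun k => ?_⟩
  rw [smul_smul, mul_assoc, mul_comm (t k), ← mul_assoc, inv_mul_cancel₀ hc.ne', one_mul]
  exact hmem k

lemma IsClosed.mem_of_mem_seqTangent (hΩ : IsClosed Ω) {u : E} (hu : u ∈ SeqTangent Ω x) :
    x ∈ Ω := by
  obtain ⟨t, w, -, ht0, hw, hmem⟩ := hu
  have hlim : Tendsto (fun k => x + t k • w k) atTop (𝓝 x) := by
    simpa using tendsto_const_nhds.add (ht0.smul hw)
  exact hΩ.mem_of_tendsto hlim (Eventually.of_forall hmem)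

end Tangent

lemma exists_strictMono_tendsto_inv_smul_sub {F : Type*} [NormedAddCommGroup F]
    [NormedSpace ℝ F] [ProperSpace F] {t : ℕ → ℝ} {y : ℕ → F} {yb : F} {C : ℝ}
    (ht : ∀ k, 0 < t k) (hy : ∀ k, ‖y k - yb‖ ≤ C * t k) :
    ∃ v : F, ∃ φ : ℕ → ℕ, StrictMono φ ∧
      Tendsto (fun k => (t (φ k))⁻¹ • (y (φ k) - yb)) atTop (𝓝 v) := by
  have hbd : ∀ k, (t k)⁻¹ • (y k - yb) ∈ Metric.closedBall (0 : F) C := fun k => by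
    rw [mem_closedBall_zero_iff, norm_smul, Real.norm_of_nonneg (inv_pos.2 (ht k)).le,
      inv_mul_le_iff₀ (ht k), mul_comm]
    exact hy k
  obtain ⟨v, -, φ, hφ, hv⟩ := tendsto_subseq_of_bounded Metric.isBounded_closedBall hbd
  exact ⟨v, φ, hφ, hv⟩

section ChainRule

variable {E F G : Type*} [NormedAddCommGroup E] [NormedSpace ℝ E]
  [NormedAddCommGroup F] [NormedSpace ℝ F] [ProperSpace F]
  [NormedAddCommGroup G] [NormedSpace ℝ G]
  {S1 : E → Set F} {S2 : F → Set G}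

lemma exists_chain_of_fuzzyInnerCalmStarDirAt
    (h1 : IsClosed {p : E × F | p.2 ∈ S1 p.1}) (h2 : IsClosed {p : F × G | p.2 ∈ S2 p.1})
    {xb : E} {zb : G} {d : E × G}
    (hd : d ∈ SeqTangent {p : E × G | ∃ y ∈ S1 p.1, p.2 ∈ S2 y} (xb, zb))
    (hic : FuzzyInnerCalmStarDirAt (fun p : E × G => {y | y ∈ S1 p.1 ∧ p.2 ∈ S2 y})
      {p : E × G | ∃ y ∈ S1 p.1, p.2 ∈ S2 y} (xb, zb) d) :
    ∃ yb : F, yb ∈ S1 xb ∧ zb ∈ S2 yb ∧ ∃ v : F,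
      (d.1, v) ∈ SeqTangent {p : E × F | p.2 ∈ S1 p.1} (xb, yb) ∧
      (v, d.2) ∈ SeqTangent {p : F × G | p.2 ∈ S2 p.1} (yb, zb) := by
  rcases hic with hnot | ⟨κ, hκ, p, -, ⟨t, e, ht, ht0, he, hp⟩, y, yb, hy, hcalm⟩
  · exact absurd hd hnot
  obtain ⟨C, hC⟩ := isBounded_iff_forall_norm_le.1 (Metric.isBounded_range_of_tendsto e he)
  have hyb : ∀ k, ‖y k - yb‖ ≤ κ * C * t k := fun k => calc
    ‖y k - yb‖ ≤ κ * ‖p k - (xb, zb)‖ := hcalm k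
    _ = κ * (t k * ‖e k‖) := by
      rw [hp k, add_sub_cancel_left, norm_smul, Real.norm_of_nonneg (ht k).le]
    _ ≤ κ * C * t k := by
      rw [mul_assoc, mul_comm (t k)]
      gcongr
      · exact (ht k).le
      · exact hC _ ⟨k, rfl⟩
  obtain ⟨v, φ, hφ, hv⟩ := exists_strictMono_tendsto_inv_smul_sub ht hyb
  have hy_eq : ∀ k, y k = yb + t k • ((t k)⁻¹ • (y k - yb)) := fun k => by
    rw [smul_inv_smul₀ (ht k).ne', add_sub_cancel]
  have htφ : Tendsto (t ∘ φ) atTop (𝓝 0) := ht0.comp hφ.tendsto_atTop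
  have heφ : Tendsto (e ∘ φ) atTop (𝓝 d) := he.comp hφ.tendsto_atTop
  have hT1 : (d.1, v) ∈ SeqTangent {p : E × F | p.2 ∈ S1 p.1} (xb, yb) := by
    refine ⟨t ∘ φ, fun k => ((e (φ k)).1, (t (φ k))⁻¹ • (y (φ k) - yb)), fun k => ht _, htφ,
      ((continuous_fst.tendsto _).comp heφ).prodMk_nhds hv, fun k => ?_⟩
    have := (hy (φ k)).1
    rwa [hp, hy_eq (φ k)] at this
  have hT2 : (v, d.2) ∈ SeqTangent {p : F × G | p.2 ∈ S2 p.1} (yb, zb) := by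
    refine ⟨t ∘ φ, fun k => ((t (φ k))⁻¹ • (y (φ k) - yb), (e (φ k)).2), fun k => ht _, htφ,
      hv.prodMk_nhds ((continuous_snd.tendsto _).comp heφ), fun k => ?_⟩
    have := (hy (φ k)).2
    rwa [hp, hy_eq (φ k)] at this
  exact ⟨yb, h1.mem_of_mem_seqTangent hT1, h2.mem_of_mem_seqTangent hT2, v, hT1, hT2⟩

end ChainRule

/-- Chain rule, upper estimate: if the intermediate map `Ξ(x, z) = S₁(x) ∩ S₂⁻¹(z)`
is inner calm* at `(xb, zb)` wrt `dom Ξ = gph S` in the fuzzy sense, then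
`DS(xb, zb)(u) ⊆ ⋃_{yb ∈ Ξ(xb, zb)} (DS₂(yb, zb) ∘ DS₁(xb, yb))(u)`. -/
theorem stmt_14 {n m s : ℕ}
    (S1 : EuclideanSpace ℝ (Fin n) → Set (EuclideanSpace ℝ (Fin m)))
    (S2 : EuclideanSpace ℝ (Fin m) → Set (EuclideanSpace ℝ (Fin s)))
    (h1 : IsClosed {p : EuclideanSpace ℝ (Fin n) × EuclideanSpace ℝ (Fin m) | p.2 ∈ S1 p.1})
    (h2 : IsClosed {p : EuclideanSpace ℝ (Fin m) × EuclideanSpace ℝ (Fin s) | p.2 ∈ S2 p.1})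
    (xb : EuclideanSpace ℝ (Fin n)) (zb : EuclideanSpace ℝ (Fin s))
    (hxz : ∃ y ∈ S1 xb, zb ∈ S2 y)
    (hic : FuzzyInnerCalmStarAt
      (fun p : EuclideanSpace ℝ (Fin n) × EuclideanSpace ℝ (Fin s) =>
        {y | y ∈ S1 p.1 ∧ p.2 ∈ S2 y})
      {p : EuclideanSpace ℝ (Fin n) × EuclideanSpace ℝ (Fin s) | ∃ y ∈ S1 p.1, p.2 ∈ S2 y}
      (xb, zb)) :
    ∀ (u : EuclideanSpace ℝ (Fin n)) (w : EuclideanSpace ℝ (Fin s)),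
      ((u, w) : _ × _) ∈
        SeqTangent {p : EuclideanSpace ℝ (Fin n) × EuclideanSpace ℝ (Fin s) |
          ∃ y ∈ S1 p.1, p.2 ∈ S2 y} (xb, zb) →
      ∃ yb : EuclideanSpace ℝ (Fin m), yb ∈ S1 xb ∧ zb ∈ S2 yb ∧
        ∃ v : EuclideanSpace ℝ (Fin m),
          ((u, v) : _ × _) ∈
            SeqTangent {p : EuclideanSpace ℝ (Fin n) × EuclideanSpace ℝ (Fin m) |
              p.2 ∈ S1 p.1} (xb, yb) ∧
          ((v, w) : _ × _) ∈
            SeqTangent {p : EuclideanSpace ℝ (Fin m) × EuclideanSpace ℝ (Fin s) |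
              p.2 ∈ S2 p.1} (yb, zb) := by
  intro u w huw
  rcases eq_or_ne ((u, w) : _ × _) 0 with h0 | h0
  · obtain ⟨rfl, rfl⟩ := Prod.mk_eq_zero.1 h0
    obtain ⟨yb, hy1, hy2⟩ := hxz
    exact ⟨yb, hy1, hy2, 0, zero_mem_seqTangent hy1, zero_mem_seqTangent hy2⟩
  set r := ‖((u, w) : _ × _)‖
  have hr : 0 < r := norm_pos_iff.2 h0
  obtain ⟨yb, hy1, hy2, v, hv1, hv2⟩ := exists_chain_of_fuzzyInnerCalmStarDirAt h1 h2
    (seqTangent_smul huw (inv_pos.2 hr)) (hic _ (norm_smul_inv_norm h0))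
  refine ⟨yb, hy1, hy2, r • v, ?_, ?_⟩
  · simpa [smul_inv_smul₀ hr.ne'] using seqTangent_smul hv1 hr
  · simpa [smul_inv_smul₀ hr.ne'] using seqTangent_smul hv2 hr
end

section
/- If S₂ : ℝ^m ⇉ ℝ^s is osc and single-valued and differentiable at ȳ ∈ S₁(x̄) with z̄ = S₂(ȳ), and S₁ : ℝ^n ⇉ ℝ^m is osc, then for S = S₂ ∘ S₁ one has the lower chain-rule estimate: for every u and every v with (u, v) ∈ T_{gph S₁}(x̄, ȳ), the vector w = ∇S₂(ȳ)v satisfies w ∈ DS(x̄, z̄)(u). Moreover (u, w, v) ∈ T_{gph Ξ}(x̄, z̄, ȳ), where Ξ(x,z) = S₁(x) ∩ S₂^{-1}(z). -/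
open Filter Topology

/-! Contingent cones are mapped into contingent cones by derivatives. The map
`(x, y) ↦ (x, f y, y)` sends `gph S₁` into `gph Ξ` and has derivative `(u, v) ↦ (u, ∇f(ȳ) v, v)`
at `(x̄, ȳ)`; the linear projection `(x, z, y) ↦ (x, z)` then sends `gph Ξ` into `gph S`. -/

theorem HasFDerivAt.mapsTo_seqTangent {E F : Type*} [NormedAddCommGroup E] [NormedSpace ℝ E]
    [NormedAddCommGroup F] [NormedSpace ℝ F] {g : E → F} {g' : E →L[ℝ] F} {x : E}
    {Ω : Set E} {Ω' : Set F} (hg : HasFDerivAt g g' x) (hΩ : Set.MapsTo g Ω Ω') :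
    Set.MapsTo g' (SeqTangent Ω x) (SeqTangent Ω' (g x)) := by
  rintro u ⟨t, w, ht, ht0, hw, hmem⟩
  have hquot : Tendsto (fun k => (t k)⁻¹ • (g (x + t k • w k) - g x)) atTop (𝓝 (g' u)) := by
    refine (hasFDerivWithinAt_univ.2 hg).lim ?_ (.of_forall fun _ => Set.mem_univ _) ?_
    · simpa using ht0.smul hw
    · simpa [smul_smul, inv_mul_cancel₀ (ht _).ne'] using hw
  refine ⟨t, _, ht, ht0, hquot, fun k => ?_⟩
  rw [smul_smul, mul_inv_cancel₀ (ht k).ne', one_smul, add_sub_cancel]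
  exact hΩ (hmem k)

theorem stmt_15_general {n m s : ℕ}
    (S1 : EuclideanSpace ℝ (Fin n) → Set (EuclideanSpace ℝ (Fin m)))
    (f : EuclideanSpace ℝ (Fin m) → EuclideanSpace ℝ (Fin s))
    (xb : EuclideanSpace ℝ (Fin n)) (yb : EuclideanSpace ℝ (Fin m))
    (hf : DifferentiableAt ℝ f yb)
    (u : EuclideanSpace ℝ (Fin n)) (v : EuclideanSpace ℝ (Fin m))
    (hv : ((u, v) : _ × _) ∈
      SeqTangent {p : EuclideanSpace ℝ (Fin n) × EuclideanSpace ℝ (Fin m) |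
        p.2 ∈ S1 p.1} (xb, yb)) :
    ((u, fderiv ℝ f yb v) : _ × _) ∈
      SeqTangent {p : EuclideanSpace ℝ (Fin n) × EuclideanSpace ℝ (Fin s) |
        ∃ y ∈ S1 p.1, p.2 = f y} (xb, f yb) ∧
    ((u, fderiv ℝ f yb v, v) : EuclideanSpace ℝ (Fin n) ×
        (EuclideanSpace ℝ (Fin s) × EuclideanSpace ℝ (Fin m))) ∈
      SeqTangent {p : EuclideanSpace ℝ (Fin n) ×
          (EuclideanSpace ℝ (Fin s) × EuclideanSpace ℝ (Fin m)) |
        p.2.2 ∈ S1 p.1 ∧ p.2.1 = f p.2.2} (xb, f yb, yb) := by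
  have hf₂ : HasFDerivAt (fun p : EuclideanSpace ℝ (Fin n) × EuclideanSpace ℝ (Fin m) => f p.2)
      _ (xb, yb) := hf.hasFDerivAt.comp (xb, yb) hasFDerivAt_snd
  have hgraph := hasFDerivAt_fst.prodMk (hf₂.prodMk hasFDerivAt_snd)
  have hΞ := hgraph.mapsTo_seqTangent
    (Ω' := {p | p.2.2 ∈ S1 p.1 ∧ p.2.1 = f p.2.2}) (fun _ hp => ⟨hp, rfl⟩) hv
  have hproj : HasFDerivAt (fun q : EuclideanSpace ℝ (Fin n) ×
      (EuclideanSpace ℝ (Fin s) × EuclideanSpace ℝ (Fin m)) => (q.1, q.2.1)) _ (xb, f yb, yb) :=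
    hasFDerivAt_fst.prodMk (hasFDerivAt_snd (𝕜 := ℝ)).fst
  refine ⟨hproj.mapsTo_seqTangent ?_ hΞ, hΞ⟩
  exact fun q hq => ⟨q.2.2, hq⟩

/-- Lower chain-rule estimate when the outer map is single-valued and differentiable:
if `(u, v) ∈ T_{gph S₁}(xb, yb)` then `w = ∇f(yb)v` satisfies `w ∈ DS(xb, f(yb))(u)`
for `S = f ∘ S₁`, and moreover `(u, w, v)` is tangent to the graph of the
intermediate map `Ξ(x, z) = S₁(x) ∩ f⁻¹(z)`. -/
theorem stmt_15 {n m s : ℕ}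
    (S1 : EuclideanSpace ℝ (Fin n) → Set (EuclideanSpace ℝ (Fin m)))
    (h1 : IsClosed {p : EuclideanSpace ℝ (Fin n) × EuclideanSpace ℝ (Fin m) | p.2 ∈ S1 p.1})
    (f : EuclideanSpace ℝ (Fin m) → EuclideanSpace ℝ (Fin s))
    (xb : EuclideanSpace ℝ (Fin n)) (yb : EuclideanSpace ℝ (Fin m))
    (hy : yb ∈ S1 xb) (hf : DifferentiableAt ℝ f yb)
    (u : EuclideanSpace ℝ (Fin n)) (v : EuclideanSpace ℝ (Fin m))
    (hv : ((u, v) : _ × _) ∈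
      SeqTangent {p : EuclideanSpace ℝ (Fin n) × EuclideanSpace ℝ (Fin m) |
        p.2 ∈ S1 p.1} (xb, yb)) :
    ((u, fderiv ℝ f yb v) : _ × _) ∈
      SeqTangent {p : EuclideanSpace ℝ (Fin n) × EuclideanSpace ℝ (Fin s) |
        ∃ y ∈ S1 p.1, p.2 = f y} (xb, f yb) ∧
    ((u, fderiv ℝ f yb v, v) : EuclideanSpace ℝ (Fin n) ×
        (EuclideanSpace ℝ (Fin s) × EuclideanSpace ℝ (Fin m))) ∈
      SeqTangent {p : EuclideanSpace ℝ (Fin n) ×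
          (EuclideanSpace ℝ (Fin s) × EuclideanSpace ℝ (Fin m)) |
        p.2.2 ∈ S1 p.1 ∧ p.2.1 = f p.2.2} (xb, f yb, yb) :=
  stmt_15_general S1 f xb yb hf u v hv
end

section
/- Semismoothness* transfer under smooth scalarization: let g : ℝ^n → ℝ^s be twice continuously differentiable, D ⊆ ℝ^s a set, x, u ∈ ℝ^n, x*, u*, w, w* ∈ ℝ^n. Suppose there exist λ, η, ζ ∈ ℝ^s with λ ∈ N_D(g(x)), ∇g(x)^T λ = x*, u* = ∇²⟨λ, g⟩(x)u + ∇g(x)^T η, w = ∇²⟨λ, g⟩(x)w* + ∇g(x)^T ζ, and suppose the pair ((∇g(x)w*, ζ), (∇g(x)u, η)) satisfies ⟨∇g(x)u, ζ⟩ = ⟨η, ∇g(x)w*⟩ (semismoothness*-type identity for N_D). Then ⟨u, w⟩ = ⟨u*, w*⟩. -/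
/-!
Writing `H = fderiv (gradient ⟨λ, g ·⟩) x` for the Hessian of `⟨λ, g⟩` at `x` and
`A = fderiv g x` for `∇g(x)`, with `Aᵀ = adjoint A`, both sides expand into
`⟨u, H w*⟩ + ⟨A u, ζ⟩` and `⟨H u, w*⟩ + ⟨η, A w*⟩`: the first terms agree by symmetry of the
Hessian of a `C²` function (Schwarz), the second by the assumed identity.
-/

open Filter Topology

/-- The regular (Fréchet) normal cone: the polar of the tangent cone (empty off `Ω`). -/
def RegNormal {E : Type*} [NormedAddCommGroup E] [InnerProductSpace ℝ E]
    (Ω : Set E) (x : E) : Set E :=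
  {v | x ∈ Ω ∧ ∀ u ∈ SeqTangent Ω x, (inner ℝ v u : ℝ) ≤ 0}

/-- The limiting (Mordukhovich) normal cone. -/
def LimNormal {E : Type*} [NormedAddCommGroup E] [InnerProductSpace ℝ E]
    (Ω : Set E) (xb : E) : Set E :=
  {v | ∃ x : ℕ → E, ∃ w : ℕ → E, Tendsto x atTop (𝓝 xb) ∧ Tendsto w atTop (𝓝 v) ∧
    ∀ k, w k ∈ RegNormal Ω (x k)}

open InnerProductSpace

theorem ContDiffAt.isSymmetric_fderiv_gradient {E : Type*} [NormedAddCommGroup E]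
    [InnerProductSpace ℝ E] [CompleteSpace E] {f : E → ℝ} {x : E} (hf : ContDiffAt ℝ 2 f x) :
    (fderiv ℝ (gradient f) x : E →ₗ[ℝ] E).IsSymmetric := by
  have hgrad : ∀ c,
      fderiv ℝ (gradient f) x c = (toDual ℝ E).symm (fderiv ℝ (fderiv ℝ f) x c) := by
    intro c
    change fderiv ℝ ((toDual ℝ E).symm ∘ fderiv ℝ f) x c = _
    rw [(toDual ℝ E).symm.comp_fderiv]
    rfl
  intro a b
  rw [ContinuousLinearMap.coe_coe, hgrad, hgrad, toDual_symm_apply, real_inner_comm,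
    toDual_symm_apply]
  exact (hf.isSymmSndFDerivAt minSmoothness_of_isRCLikeNormedField.le).eq a b

theorem ContinuousLinearMap.inner_add_adjoint_eq_of_isSymmetric {E F : Type*}
    [NormedAddCommGroup E] [InnerProductSpace ℝ E] [CompleteSpace E]
    [NormedAddCommGroup F] [InnerProductSpace ℝ F] [CompleteSpace F]
    {H : E →L[ℝ] E} (hH : (H : E →ₗ[ℝ] E).IsSymmetric) (A : E →L[ℝ] F) {u w : E} {η ζ : F}
    (h : (inner ℝ (A u) ζ : ℝ) = inner ℝ η (A w)) :
    (inner ℝ u (H w + adjoint A ζ) : ℝ) = inner ℝ (H u + adjoint A η) w := by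
  rw [inner_add_right, inner_add_left, adjoint_inner_right, adjoint_inner_left, h]
  congr 1
  exact (hH u w).symm

theorem stmt_18_general {n s : ℕ}
    (g : EuclideanSpace ℝ (Fin n) → EuclideanSpace ℝ (Fin s)) (hg : ContDiff ℝ 2 g)
    (x u us w ws : EuclideanSpace ℝ (Fin n))
    (lam eta zeta : EuclideanSpace ℝ (Fin s))
    (hus : us = fderiv ℝ (fun y => gradient (fun z => (inner ℝ lam (g z) : ℝ)) y) x u +
      ContinuousLinearMap.adjoint (fderiv ℝ g x) eta)
    (hw : w = fderiv ℝ (fun y => gradient (fun z => (inner ℝ lam (g z) : ℝ)) y) x ws +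
      ContinuousLinearMap.adjoint (fderiv ℝ g x) zeta)
    (hss : (inner ℝ (fderiv ℝ g x u) zeta : ℝ) = (inner ℝ eta (fderiv ℝ g x ws) : ℝ)) :
    (inner ℝ u w : ℝ) = (inner ℝ us ws : ℝ) := by
  have hf : ContDiff ℝ 2 fun z => (inner ℝ lam (g z) : ℝ) := (innerSL ℝ lam).contDiff.comp hg
  rw [hus, hw]
  exact ContinuousLinearMap.inner_add_adjoint_eq_of_isSymmetric
    hf.contDiffAt.isSymmetric_fderiv_gradient _ hss

/-- Semismoothness* transfer under smooth scalarization: the algebraic core of the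
proof that `x ⇉ N_Γ(x)`, `Γ = g⁻¹(D)`, is semismooth*, with
`∇²⟨lam, g⟩(x) u = fderiv (gradient ⟨lam, g ·⟩) x u` and
`∇g(x)ᵀ = (fderiv g x).adjoint`. -/
theorem stmt_18 {n s : ℕ}
    (g : EuclideanSpace ℝ (Fin n) → EuclideanSpace ℝ (Fin s)) (hg : ContDiff ℝ 2 g)
    (D : Set (EuclideanSpace ℝ (Fin s)))
    (x u xs us w ws : EuclideanSpace ℝ (Fin n))
    (lam eta zeta : EuclideanSpace ℝ (Fin s))
    (hlam : lam ∈ LimNormal D (g x))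
    (hxs : ContinuousLinearMap.adjoint (fderiv ℝ g x) lam = xs)
    (hus : us = fderiv ℝ (fun y => gradient (fun z => (inner ℝ lam (g z) : ℝ)) y) x u +
      ContinuousLinearMap.adjoint (fderiv ℝ g x) eta)
    (hw : w = fderiv ℝ (fun y => gradient (fun z => (inner ℝ lam (g z) : ℝ)) y) x ws +
      ContinuousLinearMap.adjoint (fderiv ℝ g x) zeta)
    (hss : (inner ℝ (fderiv ℝ g x u) zeta : ℝ) = (inner ℝ eta (fderiv ℝ g x ws) : ℝ)) :
    (inner ℝ u w : ℝ) = (inner ℝ us ws : ℝ) :=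
  stmt_18_general g hg x u us w ws lam eta zeta hus hw hss
end
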